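/- arXiv:1903.01824 — 3 statements merged into one kernel-verified Lean document; each statement's English description precedes it below -/
import Mathlib

section
/- Let $p$ be a prime, $a, b, c, d \in \mathbb{Z}$, $l, h, k, i \in \mathbb{N}$ with $k \geq 1$, and suppose $(p, a) = (p, b) = 1$. Let $H$ be the number of integers $x$ with $1 \leq x \leq p^h$ such that $p^i \mid c + dx$ and $a\left(\frac{c+dx}{p^i}\right)^k + b \equiv 0 \pmod{p^l}$. Then $H \leq C_k \cdot (d, p^l) \cdot \max(1, p^{h-l})$ for some constant $C_k$ depending only on $k$ (one may take $C_k = 2k$). -/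
open Finset

lemma countD (n : ℕ) [NeZero n] (M : ℕ) (hM : M ∣ n) (c0 : ℤ) :
    (Finset.univ.filter (fun w : ZMod n => (M:ℤ) ∣ ((w.val : ℤ) - c0))).card ≤ n / M := by
  have hn : n ≠ 0 := NeZero.ne n
  have hM0 : M ≠ 0 := by rintro rfl; exact hn (zero_dvd_iff.mp hM)
  have hq : 0 < (n / M : ℕ) := Nat.div_pos (Nat.le_of_dvd (Nat.pos_of_ne_zero hn) hM) (Nat.pos_of_ne_zero hM0)
  have hsub : (Finset.univ.filter (fun w : ZMod n => (M:ℤ) ∣ ((w.val : ℤ) - c0))) ⊆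
      (Finset.Ico (0:ℤ) (n / M : ℕ)).image (fun r => ((c0 + M * r : ℤ) : ZMod n)) := by
    intro w hw
    rw [mem_filter] at hw
    obtain ⟨q, hqe⟩ := hw.2
    set Q : ℤ := ((n / M : ℕ) : ℤ) with hQ
    have hQ0 : (0:ℤ) < Q := by rw [hQ]; exact_mod_cast hq
    refine Finset.mem_image.mpr ⟨q % Q, ?_, ?_⟩
    · rw [Finset.mem_Ico]
      exact ⟨Int.emod_nonneg q hQ0.ne', Int.emod_lt_of_pos q hQ0⟩
    · have hnMQ : (n : ℤ) = (M : ℤ) * Q := by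
        rw [hQ]; exact_mod_cast (Nat.mul_div_cancel' hM).symm
      have h1 : ((n:ℤ)) ∣ (c0 + M * (q % Q)) - (w.val : ℤ) := by
        have hv : (w.val:ℤ) = c0 + M * q := by linarith [hqe]
        have e1 : (c0 + M * (q % Q)) - (w.val : ℤ) = (M:ℤ) * Q * (-(q/Q)) := by
          rw [hv, Int.emod_def]; ring
        rw [e1, hnMQ]
        exact ⟨_, rfl⟩
      have h3 : ((c0 + M * (q % Q) : ℤ) : ZMod n) = ((w.val : ℤ) : ZMod n) := by
        rw [ZMod.intCast_eq_intCast_iff]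
        exact (Int.modEq_iff_dvd.mpr (by simpa using h1)).symm
      rw [h3]
      simp [ZMod.natCast_val, ZMod.cast_id]
  refine (Finset.card_le_card hsub).trans (Finset.card_image_le.trans ?_)
  simp

lemma linB (n : ℕ) [NeZero n] (d : ℤ) (e : ZMod n) :
    (Finset.univ.filter (fun t : ZMod n => (d : ZMod n) * t = e)).card ≤ Int.gcd d n := by
  have hn : n ≠ 0 := NeZero.ne n
  set g : ℕ := Int.gcd d n with hg
  have hg0 : g ≠ 0 := by
    simp only [hg, ne_eq, Int.gcd_eq_zero_iff, not_and_or]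
    right; exact_mod_cast hn
  have hgn : g ∣ n := by
    have h := Int.gcd_dvd_right (a := d) (b := (n:ℤ))
    exact Int.natCast_dvd_natCast.mp (by exact_mod_cast h)
  rcases Finset.eq_empty_or_nonempty
      (Finset.univ.filter (fun t : ZMod n => (d : ZMod n) * t = e)) with he | ⟨t0, ht0⟩
  · rw [he]; simp [Nat.pos_of_ne_zero hg0]
  rw [Finset.mem_filter] at ht0
  -- injection t ↦ t - t0 into kernel
  have hinj : (Finset.univ.filter (fun t : ZMod n => (d : ZMod n) * t = e)).card ≤
      (Finset.univ.filter (fun s : ZMod n => (d : ZMod n) * s = 0)).card := by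
    apply Finset.card_le_card_of_injOn (fun t => t - t0)
    · intro t ht
      rw [Finset.mem_coe, Finset.mem_filter] at ht
      rw [Finset.mem_coe, Finset.mem_filter]
      refine ⟨Finset.mem_univ _, ?_⟩
      rw [mul_sub, ht.2, ht0.2, sub_self]
    · intro x _ y _ hxy
      simpa using congrArg (· + t0) hxy
  refine hinj.trans ?_
  -- kernel is contained in countD set with M := n / g
  have hMn : n / g ∣ n := Nat.div_dvd_of_dvd hgn
  have hsub : (Finset.univ.filter (fun s : ZMod n => (d : ZMod n) * s = 0)) ⊆
      (Finset.univ.filter (fun w : ZMod n => ((n / g : ℕ):ℤ) ∣ ((w.val : ℤ) - 0))) := by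
    intro s hs
    rw [Finset.mem_filter] at hs ⊢
    refine ⟨Finset.mem_univ _, ?_⟩
    rw [sub_zero]
    have hdvd : (n : ℤ) ∣ d * (s.val : ℤ) := by
      rw [← ZMod.intCast_zmod_eq_zero_iff_dvd]
      push_cast
      rw [ZMod.natCast_val, ZMod.cast_id]
      exact hs.2
    -- n = g * (n/g), d = g * d', gcd(d/g, n/g) = 1
    have hgpos : 0 < Int.gcd d (n:ℤ) := Nat.pos_of_ne_zero hg0
    have hco : Int.gcd (d / g) ((n:ℤ) / g) = 1 := Int.gcd_div_gcd_div_gcd hgpos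
    have hdg : (g:ℤ) ∣ d := Int.gcd_dvd_left d n
    have hng : (g:ℤ) ∣ (n:ℤ) := Int.gcd_dvd_right d n
    have hnq : ((n / g : ℕ) : ℤ) = (n:ℤ) / g := by
      exact_mod_cast (Int.natCast_div n g)
    rw [hnq]
    have h2 : (n:ℤ) / g ∣ (d / g) * (s.val : ℤ) := by
      have h3 : (g:ℤ) * ((n:ℤ)/g) ∣ (g:ℤ) * ((d/g) * (s.val:ℤ)) := by
        rw [Int.mul_ediv_cancel' hng, ← mul_assoc, Int.mul_ediv_cancel' hdg]
        exact hdvd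
      exact (mul_dvd_mul_iff_left (by exact_mod_cast hg0 : (g:ℤ) ≠ 0)).mp h3
    exact Int.dvd_of_dvd_mul_left_of_gcd_one (mul_comm (d/g) _ ▸ h2) (Int.gcd_comm _ _ ▸ hco)
  refine (Finset.card_le_card hsub).trans ((countD n (n/g) hMn 0).trans ?_)
  rw [Nat.div_div_self hgn hn]

-- divisibility claim, odd p
lemma oddClaim (p l k v : ℕ) (hp : p.Prime) (hodd : Odd p) (hk : 1 ≤ k)
    (hv : v = padicValNat p k) (u : ℤ)
    (h1 : (p:ℤ) ∣ u - 1) (hl : (p:ℤ)^l ∣ u^k - 1) :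
    (p:ℤ)^(l - v) ∣ u - 1 := by
  haveI : Fact p.Prime := ⟨hp⟩
  by_cases hu1 : u = 1
  · simp [hu1]
  have hfin : FiniteMultiplicity (p:ℤ) (u - 1) :=
    Int.finiteMultiplicity_iff.mpr ⟨by simpa using hp.ne_one, sub_ne_zero.mpr hu1⟩
  have hpu : ¬ (p:ℤ) ∣ u := by
    intro hd
    have h2 : (p:ℤ) ∣ 1 := by
      have := dvd_sub hd h1
      simpa using this
    have := Int.le_of_dvd one_pos h2
    have := hp.two_le
    omega
  have hlte := Int.emultiplicity_pow_sub_pow hp hodd h1 hpu k (y := 1)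
  have hle : (l : ℕ∞) ≤ emultiplicity ((p:ℤ)) (u^k - 1) := by
    apply le_emultiplicity_of_pow_dvd; exact_mod_cast hl
  rw [one_pow] at hlte
  rw [hlte, hfin.emultiplicity_eq_multiplicity, ← padicValNat_eq_emultiplicity (n := k) (by omega), ← hv] at hle
  have hle2 : l ≤ multiplicity (p:ℤ) (u - 1) + v := by exact_mod_cast hle
  apply pow_dvd_of_le_emultiplicity (k := l - v)
  rw [hfin.emultiplicity_eq_multiplicity]
  exact_mod_cast Nat.sub_le_of_le_add (by omega)

lemma twoClaim (l k v : ℕ) (hk : 1 ≤ k) (hv : v = padicValNat 2 k) (hv1 : 1 ≤ v)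
    (u : ℤ) (hu0 : 0 ≤ u) (h1 : (2:ℤ) ∣ u - 1) (hl : (2:ℤ)^l ∣ u^k - 1) :
    (2:ℤ)^(l - v) ∣ u - 1 ∨ (2:ℤ)^(l - v) ∣ u + 1 := by
  by_cases hlv : l ≤ v
  · left; rw [Nat.sub_eq_zero_of_le hlv]; simpa using dvd_refl 1 |>.trans (one_dvd _)
  by_cases hu1 : u = 1
  · left; simp [hu1]
  have hu3 : 3 ≤ u := by
    rcases h1 with ⟨c, hc⟩
    omega
  have hfin1 : FiniteMultiplicity (2:ℤ) (u - 1) :=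
    Int.finiteMultiplicity_iff.mpr ⟨by norm_num, sub_ne_zero.mpr hu1⟩
  have hfin2 : FiniteMultiplicity (2:ℤ) (u + 1) :=
    Int.finiteMultiplicity_iff.mpr ⟨by norm_num, by omega⟩
  have h2u : ¬ (2:ℤ) ∣ u := by
    intro hd
    have h2 : (2:ℤ) ∣ 1 := by
      have := dvd_sub hd h1
      simpa using this
    norm_num at h2
  have hkeven : Even k := by
    have : 2 ∣ k := by
      have := pow_dvd_pow 2 hv1
      rw [hv] at this
      exact Nat.dvd_of_mod_eq_zero (by simpa using this : ¬k = 0 ∧ k % 2 = 0).2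
    exact even_iff_two_dvd.mpr this
  have hlte := Int.two_pow_sub_pow (x := u) (y := 1) h1 h2u hkeven
  rw [one_pow] at hlte
  have hle : (l : ℕ∞) ≤ emultiplicity ((2:ℤ)) (u^k - 1) := by
    apply le_emultiplicity_of_pow_dvd; exact_mod_cast hl
  haveI : Fact (Nat.Prime 2) := ⟨Nat.prime_two⟩
  have hek : emultiplicity ((2:ℤ)) (k:ℤ) = (v : ℕ∞) := by
    rw [show ((2:ℤ)) = ((2:ℕ):ℤ) by norm_num, Int.natCast_emultiplicity, ← padicValNat_eq_emultiplicity (by omega), hv]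
  set e1 := multiplicity (2:ℤ) (u - 1) with he1
  set e2 := multiplicity (2:ℤ) (u + 1) with he2
  have key : (l : ℕ∞) + 1 ≤ (e2 : ℕ∞) + (e1 : ℕ∞) + (v : ℕ∞) := by
    calc (l:ℕ∞) + 1 ≤ emultiplicity ((2:ℤ)) (u^k - 1) + 1 := by
          exact add_le_add_left hle 1
      _ = _ := by
          rw [hlte, hfin1.emultiplicity_eq_multiplicity, hfin2.emultiplicity_eq_multiplicity, hek]
  have keyn : l + 1 ≤ e2 + e1 + v := by exact_mod_cast key
  have hd1 : (2:ℤ)^e1 ∣ u - 1 := by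
    apply pow_dvd_of_le_emultiplicity; rw [hfin1.emultiplicity_eq_multiplicity]
  have hd2 : (2:ℤ)^e2 ∣ u + 1 := by
    apply pow_dvd_of_le_emultiplicity; rw [hfin2.emultiplicity_eq_multiplicity]
  have hmin : e1 ≤ 1 ∨ e2 ≤ 1 := by
    by_contra hcon
    push_neg at hcon
    have h41 : (4:ℤ) ∣ u - 1 := dvd_trans (by norm_num [show (4:ℤ) = 2^2 by norm_num]; exact pow_dvd_pow 2 hcon.1) hd1
    have h42 : (4:ℤ) ∣ u + 1 := dvd_trans (by norm_num [show (4:ℤ) = 2^2 by norm_num]; exact pow_dvd_pow 2 hcon.2) hd2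
    have : (4:ℤ) ∣ 2 := by
      have := dvd_sub h42 h41
      simpa using this
    norm_num at this
  rcases hmin with hm | hm
  · right
    exact dvd_trans (pow_dvd_pow 2 (by omega)) hd2
  · left
    exact dvd_trans (pow_dvd_pow 2 (by omega)) hd1

-- helper: transfer w^k = 1 to ℤ
lemma toInt (n : ℕ) [NeZero n] (k : ℕ) (w : ZMod n) (hw : w ^ k = 1) :
    (n:ℤ) ∣ ((w.val:ℤ))^k - 1 := by
  have h : (((w.val:ℤ)^k - 1 : ℤ) : ZMod n) = 0 := by
    push_cast
    rw [ZMod.natCast_val, ZMod.cast_id, hw, sub_self]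
  exact_mod_cast (ZMod.intCast_zmod_eq_zero_iff_dvd _ _).mp h

lemma pdivlemma (p : ℕ) (hp : p.Prime) (l : ℕ) (hl : 1 ≤ l) (hdvd : p ∣ p^l)
    (w : ZMod (p^l)) [NeZero (p^l)] (hw1 : ZMod.castHom hdvd (ZMod p) w = 1) :
    (p:ℤ) ∣ ((w.val:ℤ)) - 1 := by
  haveI : NeZero p := ⟨hp.ne_zero⟩
  have h : (((w.val:ℤ) - 1 : ℤ) : ZMod p) = 0 := by
    push_cast
    have : ((w.val : ℕ) : ZMod p) = ZMod.castHom hdvd (ZMod p) w := by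
      rw [ZMod.castHom_apply, ZMod.natCast_val]
    rw [this, hw1, sub_self]
  exact_mod_cast (ZMod.intCast_zmod_eq_zero_iff_dvd _ _).mp h

lemma K1bound (p l k v : ℕ) (hp : p.Prime) (hl : 1 ≤ l) (hk : 1 ≤ k)
    (hv : v = padicValNat p k) (hdvd : p ∣ p^l) [NeZero (p^l)] :
    (Finset.univ.filter (fun w : ZMod (p^l) =>
      w ^ k = 1 ∧ ZMod.castHom hdvd (ZMod p) w = 1)).card ≤ 2 * p ^ v := by
  have hplpos : p ^ l ≠ 0 := pow_ne_zero l hp.ne_zero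
  have hMdvd : p ^ (l - v) ∣ p ^ l := pow_dvd_pow p (Nat.sub_le l v)
  have hdivle : p ^ l / p ^ (l - v) ≤ p ^ v := by
    apply Nat.div_le_of_le_mul
    rw [← pow_add]
    exact Nat.pow_le_pow_right hp.pos (by omega)
  rcases hp.eq_two_or_odd' with h2 | hodd
  · -- p = 2
    subst h2
    by_cases hv0 : v = 0
    · -- k odd : only w = 1
      subst hv0
      have hsub : (Finset.univ.filter (fun w : ZMod (2^l) =>
          w ^ k = 1 ∧ ZMod.castHom hdvd (ZMod 2) w = 1)) ⊆ {(1 : ZMod (2^l))} := by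
        intro w hw
        rw [mem_filter] at hw
        obtain ⟨-, hwk, -⟩ := hw
        have hwu : IsUnit w := IsUnit.of_mul_eq_one (a := w) (w ^ (k-1)) (by
          rw [← pow_succ']
          rw [show k - 1 + 1 = k by omega, hwk])
        obtain ⟨w1, hw1⟩ := hwu
        have hw1k : w1 ^ k = 1 := by
          apply Units.ext
          push_cast [hw1, hwk]
          rfl
        have hd1 : orderOf w1 ∣ k := orderOf_dvd_of_pow_eq_one hw1k
        have hd2 : orderOf w1 ∣ 2 ^ (l - 1) := by
          have hc := ZMod.card_units_eq_totient (2^l)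
          have ht : Nat.totient (2^l) = 2^(l-1) * (2 - 1) := Nat.totient_prime_pow Nat.prime_two (by omega)
          have := orderOf_dvd_card (x := w1)
          rw [hc, ht] at this
          simpa using this
        have hkodd : ¬ 2 ∣ k := by
          intro h2k
          have : 1 ≤ padicValNat 2 k := by
            rw [← Nat.factorization_def k Nat.prime_two]
            exact (Nat.Prime.pow_dvd_iff_le_factorization Nat.prime_two (by omega)).mp (by simpa using h2k)
          omega
        have hco : Nat.Coprime (2 ^ (l-1)) k :=
          Nat.Coprime.pow_left _ ((Nat.prime_two.coprime_iff_not_dvd).mpr hkodd)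
        have : orderOf w1 = 1 := Nat.eq_one_of_dvd_coprimes hco.symm hd1 hd2
        have : w1 = 1 := orderOf_eq_one_iff.mp this
        simp only [Finset.mem_singleton]
        rw [← hw1, this, Units.val_one]
      calc _ ≤ _ := Finset.card_le_card hsub
        _ ≤ 2 * 2 ^ 0 := by simp
    · -- v ≥ 1
      have hv1 : 1 ≤ v := by omega
      have hsub : (Finset.univ.filter (fun w : ZMod (2^l) =>
          w ^ k = 1 ∧ ZMod.castHom hdvd (ZMod 2) w = 1)) ⊆
          (Finset.univ.filter (fun w : ZMod (2^l) => ((2^(l-v) : ℕ):ℤ) ∣ ((w.val : ℤ) - 1))) ∪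
          (Finset.univ.filter (fun w : ZMod (2^l) => ((2^(l-v) : ℕ):ℤ) ∣ ((w.val : ℤ) - (-1)))) := by
        intro w hw
        rw [mem_filter] at hw
        obtain ⟨-, hwk, hw1⟩ := hw
        have h1 : (2:ℤ) ∣ (w.val:ℤ) - 1 := by
          have := pdivlemma 2 Nat.prime_two l hl hdvd w hw1
          exact_mod_cast this
        have hli : (2:ℤ)^l ∣ ((w.val:ℤ))^k - 1 := by
          have := toInt (2^l) k w hwk
          push_cast at this ⊢
          exact this
        rcases twoClaim l k v hk hv hv1 (w.val:ℤ) (by positivity) h1 hli with hc | hc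
        · apply Finset.mem_union_left
          rw [mem_filter]
          exact ⟨mem_univ _, by push_cast; exact hc⟩
        · apply Finset.mem_union_right
          rw [mem_filter]
          refine ⟨mem_univ _, by push_cast; rw [sub_neg_eq_add]; exact hc⟩
      calc _ ≤ _ := Finset.card_le_card hsub
        _ ≤ _ := Finset.card_union_le _ _
        _ ≤ 2 * 2 ^ v := by
          have c1 := countD (2^l) (2^(l-v)) hMdvd 1
          have c2 := countD (2^l) (2^(l-v)) hMdvd (-1)
          omega
  · -- p odd
    have hsub : (Finset.univ.filter (fun w : ZMod (p^l) =>
        w ^ k = 1 ∧ ZMod.castHom hdvd (ZMod p) w = 1)) ⊆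
        (Finset.univ.filter (fun w : ZMod (p^l) => ((p^(l-v) : ℕ):ℤ) ∣ ((w.val : ℤ) - 1))) := by
      intro w hw
      rw [mem_filter] at hw ⊢
      obtain ⟨-, hwk, hw1⟩ := hw
      have h1 : (p:ℤ) ∣ (w.val:ℤ) - 1 := pdivlemma p hp l hl hdvd w hw1
      have hli : (p:ℤ)^l ∣ ((w.val:ℤ))^k - 1 := by
        have := toInt (p^l) k w hwk
        push_cast at this ⊢
        exact this
      refine ⟨mem_univ _, by push_cast; exact oddClaim p l k v hp hodd hk hv _ h1 hli⟩
    calc _ ≤ _ := Finset.card_le_card hsub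
      _ ≤ _ := countD (p^l) (p^(l-v)) hMdvd 1
      _ ≤ 2 * p ^ v := by omega

lemma rootsC (p : ℕ) (hp : p.Prime) (l k : ℕ) (hk : 1 ≤ k) [NeZero (p^l)] :
    (Finset.univ.filter (fun u : ZMod (p^l) => u ^ k = 1)).card ≤ 2 * k := by
  haveI : Fact p.Prime := ⟨hp⟩
  rcases Nat.eq_zero_or_pos l with hl0 | hl
  · subst hl0
    calc _ ≤ Fintype.card (ZMod (p^0)) := Finset.card_filter_le _ _
      _ = 1 := by simp
      _ ≤ 2 * k := by omega
  set v : ℕ := padicValNat p k with hv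
  set m : ℕ := k / p ^ v with hm
  have hvfac : v = k.factorization p := by rw [hv, Nat.factorization_def k hp]
  have hpvk : p ^ v ∣ k := by rw [hvfac]; exact Nat.ordProj_dvd k p
  have hkvm : p ^ v * m = k := by
    rw [hm]; exact Nat.mul_div_cancel' hpvk
  have hm0 : m ≠ 0 := by
    intro h; rw [h] at hkvm; omega
  have hpm : ¬ p ∣ m := by
    rw [hm, hvfac]
    exact Nat.not_dvd_ordCompl hp (by omega)
  have hdvd : p ∣ p ^ l := dvd_pow_self p (by omega)
  set f : ZMod (p^l) → ZMod p := fun w => ZMod.castHom hdvd (ZMod p) w with hf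
  set K := Finset.univ.filter (fun u : ZMod (p^l) => u ^ k = 1) with hK
  have himg : (K.image f).card ≤ m := by
    have hsub : K.image f ⊆ (Polynomial.nthRoots m (1 : ZMod p)).toFinset := by
      intro r hr
      rw [Finset.mem_image] at hr
      obtain ⟨u, hu, rfl⟩ := hr
      rw [hK, mem_filter] at hu
      have hrk : (f u) ^ k = 1 := by
        rw [hf]
        simp only [← map_pow, hu.2, map_one]
      rw [Multiset.mem_toFinset, Polynomial.mem_nthRoots (Nat.pos_of_ne_zero hm0)]
      -- show (f u)^m = 1
      have hr0 : f u ≠ 0 := by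
        intro h0
        rw [h0, zero_pow (by omega)] at hrk
        exact zero_ne_one hrk
      have hord1 : orderOf (f u) ∣ k := orderOf_dvd_of_pow_eq_one hrk
      have hord2 : orderOf (f u) ∣ p - 1 :=
        orderOf_dvd_of_pow_eq_one (ZMod.pow_card_sub_one_eq_one hr0)
      have hordp : ¬ p ∣ orderOf (f u) := by
        intro hpd
        have h1 : orderOf (f u) ≠ 0 := by
          intro h
          rw [h] at hord2
          have := hp.two_le
          omega
        have := Nat.le_of_dvd (Nat.pos_of_ne_zero h1) hpd
        have := Nat.le_of_dvd (by have := hp.two_le; omega) hord2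
        omega
      have hco : Nat.Coprime (orderOf (f u)) (p ^ v) :=
        Nat.Coprime.pow_right _ (Nat.coprime_comm.mp ((Nat.Prime.coprime_iff_not_dvd hp).mpr hordp))
      have : orderOf (f u) ∣ m := by
        refine hco.dvd_of_dvd_mul_left ?_
        rw [hkvm]; exact hord1
      exact orderOf_dvd_iff_pow_eq_one.mp this
    calc _ ≤ _ := Finset.card_le_card hsub
      _ ≤ _ := (Multiset.toFinset_card_le _).trans (Polynomial.card_nthRoots m 1)
  have hfib : ∀ r ∈ K.image f, (K.filter fun u => f u = r).card ≤ 2 * p ^ v := by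
    intro r hr
    rw [Finset.mem_image] at hr
    obtain ⟨u0, hu0, hru0⟩ := hr
    rw [hK, mem_filter] at hu0
    have hu0k : u0 ^ k = 1 := hu0.2
    have hinj : (K.filter fun u => f u = r).card ≤
        (Finset.univ.filter (fun w : ZMod (p^l) =>
          w ^ k = 1 ∧ ZMod.castHom hdvd (ZMod p) w = 1)).card := by
      apply Finset.card_le_card_of_injOn (fun u => u * u0 ^ (k-1))
      · intro u hu
        rw [Finset.mem_coe, Finset.mem_filter, hK, Finset.mem_filter] at hu
        obtain ⟨⟨-, huk⟩, hfu⟩ := hu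
        rw [Finset.mem_coe, mem_filter]
        refine ⟨mem_univ _, ?_, ?_⟩
        · rw [mul_pow, ← pow_mul, mul_comm (k-1) k, pow_mul, hu0k, one_pow, huk, mul_one]
        · have hrk1 : r ^ k = 1 := by
            rw [← hru0, hf]
            simp only [← map_pow, hu0k, map_one]
          show f _ = 1
          rw [hf]
          simp only [map_mul, map_pow]
          show f u * (f u0) ^ (k - 1) = 1
          rw [hfu, hru0, ← pow_succ', show k - 1 + 1 = k by omega, hrk1]
      · intro x hx y hy hxy
        have hcan : ∀ z : ZMod (p^l), z ∈ K.filter (fun u => f u = r) →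
            z * u0 ^ (k-1) * u0 = z := by
          intro z _
          rw [mul_assoc, ← pow_succ, show k - 1 + 1 = k by omega, hu0k, mul_one]
        have := congrArg (· * u0) hxy
        simp only at this
        rw [hcan x hx, hcan y hy] at this
        exact this
    exact hinj.trans (K1bound p l k v hp hl hk hv hdvd)
  calc K.card ≤ (2 * p ^ v) * (K.image f).card := Finset.card_le_mul_card_image K _ hfib
    _ ≤ (2 * p ^ v) * m := Nat.mul_le_mul_left _ himg
    _ = 2 * k := by rw [mul_assoc, hkvm]

lemma intUnit (p l : ℕ) (hp : p.Prime) (x : ℤ) (hx : ¬(p:ℤ) ∣ x) :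
    IsUnit ((x : ℤ) : ZMod (p^l)) := by
  have hco : IsCoprime ((p:ℤ)^l) x := (((Nat.prime_iff_prime_int.mp hp).coprime_iff_not_dvd).mpr hx).pow_left
  obtain ⟨u, v, huv⟩ := hco
  have := congrArg (fun z : ℤ => (z : ZMod (p^l))) huv
  push_cast at this
  rw [show ((p:ZMod (p^l))^l) = 0 by exact_mod_cast ZMod.natCast_self (p^l), mul_zero, zero_add] at this
  exact IsUnit.of_mul_eq_one _ (mul_comm (v : ZMod (p^l)) _ ▸ this)

lemma polyY (p : ℕ) (hp : p.Prime) (l k : ℕ) (hk : 1 ≤ k) (a b : ℤ)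
    (ha : ¬(p:ℤ) ∣ a) (hb : ¬(p:ℤ) ∣ b) [NeZero (p^l)] :
    (Finset.univ.filter (fun y : ZMod (p^l) =>
      (a : ZMod (p^l)) * y ^ k + (b : ZMod (p^l)) = 0)).card ≤ 2 * k := by
  rcases Finset.eq_empty_or_nonempty (Finset.univ.filter (fun y : ZMod (p^l) =>
      (a : ZMod (p^l)) * y ^ k + (b : ZMod (p^l)) = 0)) with he | ⟨y0, hy0⟩
  · rw [he]; simp only [Finset.card_empty]; omega
  rw [mem_filter] at hy0
  have hau : IsUnit ((a : ℤ) : ZMod (p^l)) := intUnit p l hp a ha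
  have hbu : IsUnit ((b : ℤ) : ZMod (p^l)) := intUnit p l hp b hb
  have hy0u : IsUnit y0 := by
    have h1 : (a : ZMod (p^l)) * y0 ^ k = -(b : ZMod (p^l)) := by
      have := hy0.2; linear_combination this
    have h2 : IsUnit ((a : ZMod (p^l)) * y0 ^ k) := h1 ▸ hbu.neg
    have h3 : IsUnit (y0 ^ k) := isUnit_of_mul_isUnit_right h2
    exact (isUnit_pow_iff (by omega)).mp h3
  obtain ⟨w0, hw0⟩ := hy0u
  set z : ZMod (p^l) := ((w0⁻¹ : (ZMod (p^l))ˣ) : ZMod (p^l)) with hz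
  have hzy0 : y0 * z = 1 := by rw [hz, ← hw0]; exact_mod_cast w0.mul_inv
  have hinj : (Finset.univ.filter (fun y : ZMod (p^l) =>
      (a : ZMod (p^l)) * y ^ k + (b : ZMod (p^l)) = 0)).card ≤
      (Finset.univ.filter (fun u : ZMod (p^l) => u ^ k = 1)).card := by
    apply Finset.card_le_card_of_injOn (fun y => y * z)
    · intro y hy
      rw [Finset.mem_coe, mem_filter] at hy
      rw [Finset.mem_coe, mem_filter]
      refine ⟨mem_univ _, ?_⟩
      have hyk : y ^ k = y0 ^ k := by
        have h1 := hy.2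
        have h2 := hy0.2
        have h3 : (a : ZMod (p^l)) * y ^ k = (a : ZMod (p^l)) * y0 ^ k := by
          linear_combination h1 - h2
        exact hau.mul_left_cancel h3
      rw [mul_pow, hyk, ← mul_pow, hzy0, one_pow]
    · intro x _ y _ hxy
      have := congrArg (· * y0) hxy
      simp only at this
      rwa [mul_assoc, mul_assoc, mul_comm z y0, hzy0, mul_one, mul_one] at this
  exact hinj.trans (rootsC p hp l k hk)

lemma fibIcc (p h l : ℕ) (hp : 0 < p) (t : ZMod (p^l)) :
    ((Finset.Icc (1:ℤ) ((p:ℤ)^h)).filter (fun x : ℤ => ((x : ZMod (p^l)) = t))).card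
      ≤ p ^ (h - l) := by
  have hpl : (0:ℤ) < (p:ℤ)^l := by positivity
  have hcard : ((Finset.Ico (0:ℤ) ((p:ℤ)^(h-l) * 1)).card) = p ^ (h-l) := by
    rw [mul_one, Int.card_Ico, show ((p:ℤ)^(h-l) - 0 : ℤ) = ((p^(h-l):ℕ):ℤ) by push_cast; ring]
    exact Int.toNat_natCast _
  calc _ ≤ (Finset.Ico (0:ℤ) ((p:ℤ)^(h-l) * 1)).card := by
        apply Finset.card_le_card_of_injOn (fun x => (x - 1) / (p:ℤ)^l)
        · intro x hx
          rw [Finset.mem_coe, mem_filter, Finset.mem_Icc] at hx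
          rw [Finset.mem_coe, Finset.mem_Ico, mul_one]
          constructor
          · exact Int.ediv_nonneg (by omega) (by positivity)
          · rw [Int.ediv_lt_iff_lt_mul hpl]
            have h1 : (p:ℤ)^h ≤ (p:ℤ)^(h-l) * (p:ℤ)^l := by
              rw [← pow_add]
              exact pow_le_pow_right₀ (by exact_mod_cast hp) (by omega)
            omega
        · intro x hx y hy hxy
          rw [mem_coe, mem_filter] at hx hy
          have hmq : x - 1 ≡ y - 1 [ZMOD ((p^l : ℕ) : ℤ)] := by
            have : ((x : ZMod (p^l)) = (y : ZMod (p^l))) := by rw [hx.2, hy.2]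
            rw [ZMod.intCast_eq_intCast_iff] at this
            exact Int.ModEq.sub_right 1 this
          have hmod : (x - 1) % (p:ℤ)^l = (y - 1) % (p:ℤ)^l := by
            have hcast : ((p^l : ℕ) : ℤ) = (p:ℤ)^l := by push_cast; ring
            rw [← hcast]
            exact hmq
          simp only at hxy
          have hxy1 : x - 1 = y - 1 := by
            calc x - 1 = (p:ℤ)^l * ((x-1)/(p:ℤ)^l) + (x-1) % (p:ℤ)^l :=
                  (Int.mul_ediv_add_emod _ _).symm
              _ = (p:ℤ)^l * ((y-1)/(p:ℤ)^l) + (y-1) % (p:ℤ)^l := by rw [hxy, hmod]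
              _ = y - 1 := Int.mul_ediv_add_emod _ _
          omega
      _ = p ^ (h-l) := hcard

theorem stmt_0 (p : ℕ) (hp : p.Prime) (a b c d : ℤ) (l h k i : ℕ) (hk : 1 ≤ k)
    (ha : ¬ (p : ℤ) ∣ a) (hb : ¬ (p : ℤ) ∣ b) :
    ((Finset.Icc (1 : ℤ) ((p : ℤ) ^ h)).filter
      (fun x => (p : ℤ) ^ i ∣ c + d * x ∧
        ((p : ℤ) ^ l) ∣ a * ((c + d * x) / (p : ℤ) ^ i) ^ k + b)).card
      ≤ 2 * k * Int.gcd d ((p : ℤ) ^ l) * max 1 (p ^ (h - l)) := by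
  haveI : NeZero (p ^ l) := ⟨pow_ne_zero l hp.ne_zero⟩
  classical
  set n := p ^ l with hn
  set g : ℕ := Int.gcd d ((p:ℤ)^l) with hg
  set S := ((Finset.Icc (1 : ℤ) ((p : ℤ) ^ h)).filter
      (fun x => (p : ℤ) ^ i ∣ c + d * x ∧
        ((p : ℤ) ^ l) ∣ a * ((c + d * x) / (p : ℤ) ^ i) ^ k + b)) with hS
  set f : ℤ → ZMod n := fun x => ((x : ℤ) : ZMod n) with hf
  -- fiber bound
  have hfib : ∀ t ∈ S.image f, (S.filter fun x => f x = t).card ≤ p ^ (h - l) := by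
    intro t _
    refine le_trans (Finset.card_le_card ?_) (fibIcc p h l hp.pos t)
    intro x hx
    rw [Finset.mem_filter] at hx ⊢
    rw [hS, Finset.mem_filter] at hx
    exact ⟨hx.1.1, hx.2⟩
  -- image bound
  have himg : (S.image f).card ≤ 2 * k * g := by
    set Y := (Finset.univ.filter (fun y : ZMod (p^l) =>
      (a : ZMod (p^l)) * y ^ k + (b : ZMod (p^l)) = 0)) with hY
    have hsub : S.image f ⊆ Y.biUnion (fun y =>
        Finset.univ.filter (fun t : ZMod (p^l) =>
          (d : ZMod (p^l)) * t = ((p:ℤ)^i : ℤ) * y - (c : ZMod (p^l)))) := by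
      intro t ht
      rw [Finset.mem_image] at ht
      obtain ⟨x, hx, rfl⟩ := ht
      rw [hS, Finset.mem_filter] at hx
      obtain ⟨-, hdvd, hpoly⟩ := hx
      set yI : ℤ := (c + d * x) / (p:ℤ)^i with hyI
      have hexact : c + d * x = (p:ℤ)^i * yI := (Int.mul_ediv_cancel' hdvd).symm
      refine Finset.mem_biUnion.mpr ⟨((yI : ℤ) : ZMod (p^l)), ?_, ?_⟩
      · rw [hY, Finset.mem_filter]
        refine ⟨Finset.mem_univ _, ?_⟩
        have h0 : ((a * yI ^ k + b : ℤ) : ZMod (p^l)) = 0 := by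
          rw [ZMod.intCast_zmod_eq_zero_iff_dvd]
          exact_mod_cast hpoly
        push_cast at h0
        exact h0
      · rw [Finset.mem_filter]
        refine ⟨Finset.mem_univ _, ?_⟩
        have hc := congrArg (fun z : ℤ => (z : ZMod (p^l))) hexact
        push_cast at hc ⊢
        show (d : ZMod (p^l)) * (x : ZMod (p^l)) = _
        linear_combination hc
    calc _ ≤ _ := Finset.card_le_card hsub
      _ ≤ ∑ y ∈ Y, (Finset.univ.filter (fun t : ZMod (p^l) =>
            (d : ZMod (p^l)) * t = ((p:ℤ)^i : ℤ) * y - (c : ZMod (p^l)))).card :=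
          Finset.card_biUnion_le
      _ ≤ ∑ _y ∈ Y, g := by
          apply Finset.sum_le_sum
          intro y _
          have := linB (p^l) d (((p:ℤ)^i : ℤ) * y - (c : ZMod (p^l)))
          convert this using 2
          congr 1
          push_cast
          ring
      _ = Y.card * g := by rw [Finset.sum_const, smul_eq_mul]
      _ ≤ 2 * k * g := Nat.mul_le_mul_right g (polyY p hp l k hk a b ha hb)
  have hmax : max 1 (p ^ (h - l)) = p ^ (h - l) :=
    max_eq_right (Nat.one_le_pow _ _ hp.pos)
  calc S.card ≤ p ^ (h-l) * (S.image f).card := Finset.card_le_mul_card_image S _ hfib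
    _ ≤ p ^ (h-l) * (2 * k * g) := Nat.mul_le_mul_left _ himg
    _ = 2 * k * g * max 1 (p ^ (h - l)) := by rw [hmax]; ring
end

section
/- Let $b, W \in \mathbb{N}$, $d \geq 1$, $\beta \in \mathbb{R}$, and $X, Y > 0$. Define $\nu(b, \beta) = \sum_{X < t \leq X+Y,\, t \equiv b \pmod W} \frac{1}{k} t^{1/k - 1} e(\beta t / W)$. Then $\frac{\nu(b,\beta)}{d} = \frac{1}{W} \int_{X^{1/k}/d}^{(X+Y)^{1/k}/d} e(\beta d^k \gamma^k / W)\, d\gamma + O\left(\frac{|\beta| Y}{dW} + \frac{1}{d}\right)$, with an absolute implied constant (uniform in all parameters). -/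
open MeasureTheory intervalIntegral Finset Set

noncomputable def gf (k W : ℕ) (β u : ℝ) : ℂ :=
  (((1 / k : ℝ) * u ^ ((1 : ℝ) / k - 1) : ℝ) : ℂ) *
    Complex.exp (2 * Real.pi * Complex.I * ((β * u / W : ℝ) : ℂ))

noncomputable def aamp (k : ℕ) (u : ℝ) : ℝ := (1 / k : ℝ) * u ^ ((1 : ℝ) / k - 1)

lemma expI_lip (x y : ℝ) :
    ‖Complex.exp (x * Complex.I) - Complex.exp (y * Complex.I)‖ ≤ |x - y| := by
  have h1 : ∀ t : ℝ, HasDerivAt (fun s : ℝ => Complex.exp (s * Complex.I))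
      (Complex.I * Complex.exp (t * Complex.I)) t := by
    intro t
    have hh : HasDerivAt (fun s : ℝ => ((s : ℂ) * Complex.I)) Complex.I t := by
      simpa using (Complex.ofRealCLM.hasDerivAt (x := t)).mul_const Complex.I
    exact
      (Complex.hasDerivAt_exp ((t : ℂ) * Complex.I)).scomp t hh
  have := Convex.norm_image_sub_le_of_norm_hasDerivWithin_le
    (f := fun s : ℝ => Complex.exp (s * Complex.I))
    (f' := fun t => Complex.I * Complex.exp (t * Complex.I)) (C := 1)
    (fun t _ => (h1 t).hasDerivWithinAt)
    (fun t _ => by simp [Complex.norm_exp]) convex_univ (Set.mem_univ y) (Set.mem_univ x)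
  simpa [Real.norm_eq_abs] using this

section amp
variable {k : ℕ} (hk : 1 ≤ k)

lemma aamp_nonneg (u : ℝ) (hu : 0 ≤ u) : 0 ≤ aamp k u := by
  unfold aamp; positivity

lemma aamp_le_one (hk : 1 ≤ k) {u : ℝ} (hu : 1 ≤ u) : aamp k u ≤ 1 := by
  unfold aamp
  have h1 : u ^ ((1 : ℝ) / k - 1) ≤ 1 :=
    Real.rpow_le_one_of_one_le_of_nonpos hu (by
      have : (1:ℝ) ≤ (k:ℝ) := by exact_mod_cast hk
      have : (1:ℝ)/k ≤ 1 := by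
        rw [div_le_one (by linarith)]; exact this
      linarith)
  have h2 : (1 : ℝ) / k ≤ 1 := by
    have : (1:ℝ) ≤ (k:ℝ) := by exact_mod_cast hk
    rw [div_le_one (by linarith)]; exact this
  have h3 : (0:ℝ) ≤ 1/k := by positivity
  nlinarith [Real.rpow_nonneg (le_trans zero_le_one hu) ((1:ℝ)/k - 1)]

lemma aamp_anti (hk : 1 ≤ k) {u v : ℝ} (hu : 0 < u) (huv : u ≤ v) : aamp k v ≤ aamp k u := by
  unfold aamp
  have hc : (1 : ℝ) / k - 1 ≤ 0 := by
    have : (1:ℝ) ≤ (k:ℝ) := by exact_mod_cast hk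
    have : (1:ℝ)/k ≤ 1 := by rw [div_le_one (by linarith)]; exact this
    linarith
  have := Real.rpow_le_rpow_of_nonpos hu huv hc
  have h3 : (0:ℝ) ≤ 1/k := by positivity
  nlinarith

lemma abs_gf (k W : ℕ) (β : ℝ) {u : ℝ} (hu : 0 ≤ u) :
    ‖gf k W β u‖ = aamp k u := by
  unfold gf aamp
  rw [norm_mul, Complex.norm_real, Real.norm_eq_abs]
  have harg : 2 * Real.pi * Complex.I * ((β * u / W : ℝ) : ℂ)
      = ((2 * Real.pi * (β * u / W) : ℝ) : ℂ) * Complex.I := by push_cast; ring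
  rw [harg, Complex.norm_exp_ofReal_mul_I, mul_one, abs_of_nonneg (by positivity)]

end amp

lemma gf_contOn (k W : ℕ) (β : ℝ) : ContinuousOn (gf k W β) (Set.Ioi (0:ℝ)) := by
  unfold gf
  apply ContinuousOn.mul
  · apply Complex.continuous_ofReal.comp_continuousOn
    apply ContinuousOn.mul continuousOn_const
    intro u hu
    exact (Real.continuousAt_rpow_const u _ (Or.inl (ne_of_gt hu))).continuousWithinAt
  · apply Continuous.comp_continuousOn Complex.continuous_exp
    apply ContinuousOn.mul continuousOn_const
    exact Complex.continuous_ofReal.comp_continuousOn (by fun_prop)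

lemma gf_integrable (k W : ℕ) (β : ℝ) {p q : ℝ} (hp : 0 < p) (hq : 0 < q) :
    IntervalIntegrable (gf k W β) MeasureTheory.volume p q := by
  apply ContinuousOn.intervalIntegrable
  apply (gf_contOn k W β).mono
  intro x hx
  rcases Set.mem_uIcc.mp hx with h | h
  · exact lt_of_lt_of_le hp h.1
  · exact lt_of_lt_of_le hq h.1

lemma aamp_integral (k : ℕ) (hk : 1 ≤ k) {p q : ℝ} (hp : 0 < p) (hpq : p ≤ q) :
    ∫ u in p..q, aamp k u = q ^ ((1:ℝ)/k) - p ^ ((1:ℝ)/k) := by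
  unfold aamp
  rw [intervalIntegral.integral_const_mul]
  have hkR : (0:ℝ) < (k:ℝ) := by exact_mod_cast hk
  have h : ∫ u in p..q, u ^ ((1:ℝ)/k - 1)
      = (q ^ ((1:ℝ)/k - 1 + 1) - p ^ ((1:ℝ)/k - 1 + 1)) / ((1:ℝ)/k - 1 + 1) :=
    integral_rpow (Or.inl (by have h0 : (0:ℝ) < 1/(k:ℝ) := by positivity
                              linarith))
  rw [h]
  have : (1:ℝ)/k - 1 + 1 = 1/k := by ring
  rw [this]
  field_simp

lemma gf_int_bound (k W : ℕ) (β : ℝ) (hk : 1 ≤ k) {p q : ℝ} (hp : 0 < p) (hpq : p ≤ q) :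
    ‖∫ u in p..q, gf k W β u‖ ≤ q ^ ((1:ℝ)/k) - p ^ ((1:ℝ)/k) := by
  calc ‖∫ u in p..q, gf k W β u‖ ≤ ∫ u in p..q, ‖gf k W β u‖ :=
        intervalIntegral.norm_integral_le_integral_norm hpq
    _ = ∫ u in p..q, aamp k u := by
        apply intervalIntegral.integral_congr
        intro u hu
        rw [Set.uIcc_of_le hpq] at hu
        exact abs_gf k W β (le_trans hp.le hu.1)
    _ = q ^ ((1:ℝ)/k) - p ^ ((1:ℝ)/k) := aamp_integral k hk hp hpq

lemma per_interval (k W : ℕ) (hk : 1 ≤ k) (hW : 1 ≤ W) (β : ℝ) {t s : ℝ}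
    (ht : 1 ≤ t) (hts : t ≤ s) (hsW : s ≤ t + W) :
    ‖gf k W β t - (1/(W:ℂ)) * ∫ u in t..s, gf k W β u‖
      ≤ (aamp k t - aamp k (t + W)) + 2*Real.pi*|β| * (s-t)/W + (1 - (s-t)/W) := by
  have hW0 : (0:ℝ) < W := by exact_mod_cast hW
  have hWc : (W:ℂ) ≠ 0 := by exact_mod_cast hW0.ne'
  have ht0 : (0:ℝ) < t := lt_of_lt_of_le one_pos ht
  have hInt : IntervalIntegrable (gf k W β) MeasureTheory.volume t s :=
    gf_integrable k W β ht0 (lt_of_lt_of_le ht0 hts)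
  have hgfv : ∀ v : ℝ, gf k W β v
      = ((aamp k v : ℝ):ℂ) * Complex.exp (2 * Real.pi * Complex.I * ((β * v / W : ℝ) : ℂ)) :=
    fun v => rfl
  set C0 : ℝ := (aamp k t - aamp k (t + W)) + 2*Real.pi*|β| * (s-t)/W with hC0
  have hC0nn : 0 ≤ C0 := by
    have h1 := aamp_anti hk ht0 (by linarith : t ≤ t + W)
    have h2 : (0:ℝ) ≤ 2*Real.pi*|β| * (s-t)/W :=
      div_nonneg (mul_nonneg (mul_nonneg (by positivity) (abs_nonneg β)) (by linarith)) hW0.le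
    simp only [hC0]; linarith
  -- pointwise bound
  have hpt : ∀ u ∈ Set.uIoc t s, ‖gf k W β u - gf k W β t‖ ≤ C0 := by
    intro u hu
    rw [Set.uIoc_of_le hts] at hu
    obtain ⟨hu1, hu2⟩ := hu
    have hu0 : 0 < u := lt_trans ht0 hu1
    have hdec : gf k W β u - gf k W β t
        = ((aamp k u - aamp k t : ℝ):ℂ) *
            Complex.exp (2 * Real.pi * Complex.I * ((β * u / W : ℝ) : ℂ))
          + ((aamp k t : ℝ):ℂ) *
            (Complex.exp (2 * Real.pi * Complex.I * ((β * u / W : ℝ) : ℂ))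
              - Complex.exp (2 * Real.pi * Complex.I * ((β * t / W : ℝ) : ℂ))) := by
      rw [hgfv, hgfv]; push_cast; ring
    have hexp : ‖Complex.exp (2 * Real.pi * Complex.I * ((β * u / W : ℝ) : ℂ))
        - Complex.exp (2 * Real.pi * Complex.I * ((β * t / W : ℝ) : ℂ))‖
        ≤ 2*Real.pi*|β| * (s-t)/W := by
      have e1 : 2 * Real.pi * Complex.I * ((β * u / W : ℝ) : ℂ)
          = ((2*Real.pi*(β*u/W) : ℝ) : ℂ) * Complex.I := by push_cast; ring
      have e2 : 2 * Real.pi * Complex.I * ((β * t / W : ℝ) : ℂ)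
          = ((2*Real.pi*(β*t/W) : ℝ) : ℂ) * Complex.I := by push_cast; ring
      rw [e1, e2]
      calc ‖_‖ ≤ |2*Real.pi*(β*u/W) - 2*Real.pi*(β*t/W)| := expI_lip _ _
        _ = 2*Real.pi*|β| * |u - t| / |(W:ℝ)| := by
            rw [show 2*Real.pi*(β*u/W) - 2*Real.pi*(β*t/W) = 2*Real.pi*β*(u-t)/W by ring,
              abs_div, abs_mul, abs_mul,
              abs_of_nonneg (by positivity : (0:ℝ) ≤ 2*Real.pi)]
        _ ≤ 2*Real.pi*|β| * (s-t)/W := by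
            rw [abs_of_nonneg hW0.le, abs_of_nonneg (by linarith : (0:ℝ) ≤ u - t)]
            have hst : u - t ≤ s - t := by linarith
            gcongr
    have hamp : |aamp k u - aamp k t| ≤ aamp k t - aamp k (t + W) := by
      have h1 := aamp_anti hk ht0 hu1.le
      have h2 := aamp_anti hk hu0 (by linarith : u ≤ t + W)
      rw [abs_of_nonpos (by linarith)]
      linarith
    have hat : aamp k t ≤ 1 := aamp_le_one hk ht
    have hatn : 0 ≤ aamp k t := aamp_nonneg t ht0.le
    calc ‖gf k W β u - gf k W β t‖
        ≤ ‖((aamp k u - aamp k t : ℝ):ℂ) *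
            Complex.exp (2 * Real.pi * Complex.I * ((β * u / W : ℝ) : ℂ))‖
          + ‖((aamp k t : ℝ):ℂ) *
            (Complex.exp (2 * Real.pi * Complex.I * ((β * u / W : ℝ) : ℂ))
              - Complex.exp (2 * Real.pi * Complex.I * ((β * t / W : ℝ) : ℂ)))‖ := by
          rw [hdec]; exact norm_add_le _ _
      _ ≤ |aamp k u - aamp k t| * 1 + aamp k t * (2*Real.pi*|β| * (s-t)/W) := by
          have hE : ‖Complex.exp (2 * Real.pi * Complex.I * ((β * u / W : ℝ) : ℂ))‖ = 1 := by
            rw [show 2 * Real.pi * Complex.I * ((β * u / W : ℝ) : ℂ)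
                = ((2*Real.pi*(β*u/W) : ℝ) : ℂ) * Complex.I by push_cast; ring,
              Complex.norm_exp_ofReal_mul_I]
          rw [norm_mul, norm_mul, hE, Complex.norm_real, Complex.norm_real, Real.norm_eq_abs,
            Real.norm_eq_abs, abs_of_nonneg hatn]
          gcongr
      _ ≤ C0 := by
          simp only [hC0, mul_one]
          have h9 : (0:ℝ) ≤ 2*Real.pi*|β| * (s-t)/W :=
            div_nonneg (mul_nonneg (mul_nonneg (by positivity) (abs_nonneg β)) (by linarith)) hW0.le
          nlinarith [mul_le_mul_of_nonneg_right hat h9]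
  -- split the integral
  have hsplit : (∫ u in t..s, gf k W β u)
      = (∫ u in t..s, (gf k W β u - gf k W β t)) + ((s - t : ℝ):ℂ) * gf k W β t := by
    rw [intervalIntegral.integral_sub hInt intervalIntegrable_const,
      intervalIntegral.integral_const]
    rw [Complex.real_smul]; ring
  have hmain : gf k W β t - (1/(W:ℂ)) * ∫ u in t..s, gf k W β u
      = ((1 - (s-t)/W : ℝ):ℂ) * gf k W β t
        - (1/(W:ℂ)) * ∫ u in t..s, (gf k W β u - gf k W β t) := by
    rw [hsplit]; push_cast; field_simp; ring
  rw [hmain]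
  have hIb : ‖∫ u in t..s, (gf k W β u - gf k W β t)‖ ≤ C0 * |s - t| :=
    intervalIntegral.norm_integral_le_of_norm_le_const hpt
  have habs1 : ‖((1 - (s-t)/W : ℝ):ℂ) * gf k W β t‖ ≤ 1 - (s-t)/W := by
    rw [norm_mul, Complex.norm_real, Real.norm_eq_abs]
    have h1 : (0:ℝ) ≤ 1 - (s-t)/W := by
      rw [sub_nonneg, div_le_one hW0]; linarith
    rw [abs_of_nonneg h1]
    have h2 : ‖gf k W β t‖ ≤ 1 := by
      rw [abs_gf k W β ht0.le]; exact aamp_le_one hk ht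
    nlinarith [norm_nonneg (gf k W β t)]
  have habs2 : ‖(1/(W:ℂ)) * ∫ u in t..s, (gf k W β u - gf k W β t)‖ ≤ C0 := by
    rw [norm_mul]
    have : ‖(1/(W:ℂ))‖ = 1/(W:ℝ) := by
      rw [norm_div, norm_one, Complex.norm_natCast]
    rw [this]
    calc 1/(W:ℝ) * ‖∫ u in t..s, (gf k W β u - gf k W β t)‖ ≤ 1/(W:ℝ) * (C0 * |s-t|) := by
          gcongr
      _ ≤ C0 := by
          rw [abs_of_nonneg (by linarith : (0:ℝ) ≤ s - t)]
          rw [div_mul_eq_mul_div, one_mul, div_le_iff₀ hW0]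
          nlinarith [hC0nn]
  calc ‖_ - _‖ ≤ ‖((1 - (s-t)/W : ℝ):ℂ) * gf k W β t‖
        + ‖(1/(W:ℂ)) * ∫ u in t..s, (gf k W β u - gf k W β t)‖ := norm_sub_le _ _
    _ ≤ (1 - (s-t)/W) + C0 := add_le_add habs1 habs2
    _ = _ := by simp only [hC0]; ring

lemma main_sum (k W : ℕ) (hk : 1 ≤ k) (hW : 1 ≤ W) (β X Y : ℝ) (hX : 0 < X) (hY : 0 < Y)
    (t0 : ℤ) (N : ℕ) (ht0l : X < t0) (ht1 : 1 ≤ t0)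
    (htN : (t0:ℝ) + N*W ≤ X + Y) (htN2 : X + Y < (t0:ℝ) + N*W + W) :
    ‖(∑ j ∈ Finset.range (N+1), gf k W β ((t0:ℝ) + j*W))
        - (1/(W:ℂ)) * ∫ u in (t0:ℝ)..(X+Y), gf k W β u‖
      ≤ 2 + 2*Real.pi*|β| * Y/W := by
  have hW0 : (0:ℝ) < W := by exact_mod_cast hW
  have ht0R : (1:ℝ) ≤ (t0:ℝ) := by exact_mod_cast ht1
  have hNW : (0:ℝ) ≤ (N:ℝ)*W := by positivity
  have ht0XY : (t0:ℝ) ≤ X + Y := by linarith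
  set c : ℕ → ℝ := fun j => min ((t0:ℝ) + j*W) (X+Y) with hc
  have hcj : ∀ j, j ≤ N → c j = (t0:ℝ) + j*W := by
    intro j hj
    apply min_eq_left
    have h1 : (j:ℝ) * W ≤ (N:ℝ) * W := by
      apply mul_le_mul_of_nonneg_right _ hW0.le
      exact_mod_cast hj
    linarith
  have hc0 : c 0 = (t0:ℝ) := by simpa using hcj 0 (Nat.zero_le N)
  have hcN : c (N+1) = X + Y := by
    apply min_eq_right
    push_cast
    linarith
  have hclb : ∀ j, (1:ℝ) ≤ c j := by
    intro j
    apply le_min _ (by linarith)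
    have : (0:ℝ) ≤ (j:ℝ)*W := by positivity
    linarith
  have hcub : ∀ j, c j ≤ X + Y := fun j => min_le_right _ _
  -- integrability
  have hint : ∀ i, i < N + 1 → IntervalIntegrable (gf k W β) MeasureTheory.volume (c i) (c (i+1)) := by
    intro i _
    exact gf_integrable k W β (lt_of_lt_of_le one_pos (hclb i)) (lt_of_lt_of_le one_pos (hclb (i+1)))
  have hadj : ∑ i ∈ Finset.range (N+1), ∫ x in (c i)..(c (i+1)), gf k W β x
      = ∫ x in (c 0)..(c (N+1)), gf k W β x :=
    intervalIntegral.sum_integral_adjacent_intervals hint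
  have hdecomp : (∑ j ∈ Finset.range (N+1), gf k W β ((t0:ℝ) + j*W))
        - (1/(W:ℂ)) * ∫ u in (t0:ℝ)..(X+Y), gf k W β u
      = ∑ j ∈ Finset.range (N+1),
          (gf k W β ((t0:ℝ) + j*W) - (1/(W:ℂ)) * ∫ u in (c j)..(c (j+1)), gf k W β u) := by
    rw [Finset.sum_sub_distrib, ← Finset.mul_sum, hadj, hc0, hcN]
  set f : ℕ → ℝ := fun j => aamp k ((t0:ℝ) + j*W) with hf
  set B : ℕ → ℝ := fun j => (f j - f (j+1)) + (2*Real.pi*|β| / W) * (c (j+1) - c j)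
    + (1 - (1/(W:ℝ)) * (c (j+1) - c j)) with hB
  have hper : ∀ j ∈ Finset.range (N+1),
      ‖gf k W β ((t0:ℝ) + j*W) - (1/(W:ℂ)) * ∫ u in (c j)..(c (j+1)), gf k W β u‖
        ≤ B j := by
    intro j hj
    have hj' : j ≤ N := Nat.lt_succ_iff.mp (Finset.mem_range.mp hj)
    have hcjj : c j = (t0:ℝ) + j*W := hcj j hj'
    have htle : (1:ℝ) ≤ (t0:ℝ) + j*W := by rw [← hcjj]; exact hclb j
    have hts : (t0:ℝ) + j*W ≤ c (j+1) := by
      apply le_min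
      · push_cast; nlinarith
      · rw [← hcjj]; exact hcub j
    have hsW : c (j+1) ≤ ((t0:ℝ) + j*W) + W := by
      calc c (j+1) ≤ (t0:ℝ) + (j+1:ℕ)*W := min_le_left _ _
        _ = ((t0:ℝ) + j*W) + W := by push_cast; ring
    have h1 := per_interval k W hk hW β htle hts hsW
    have heq : ((t0:ℝ) + j*W) + W = (t0:ℝ) + (j+1:ℕ)*W := by push_cast; ring
    rw [heq] at h1
    rw [hcjj]
    calc ‖_‖ ≤ _ := h1
      _ = B j := by
          simp only [hB, hf, hcjj]
          ring
  have hsum : ∑ j ∈ Finset.range (N+1), B j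
      = (f 0 - f (N+1)) + (2*Real.pi*|β| / W) * ((X+Y) - (t0:ℝ))
        + ((N+1) - (1/(W:ℝ)) * ((X+Y) - (t0:ℝ))) := by
    simp only [hB]
    rw [Finset.sum_add_distrib, Finset.sum_add_distrib, Finset.sum_range_sub' f (N+1),
      Finset.sum_sub_distrib, ← Finset.mul_sum, ← Finset.mul_sum,
      Finset.sum_range_sub c (N+1), hc0, hcN]
    simp
  have hf0 : f 0 ≤ 1 := by
    have : (t0:ℝ) + (0:ℕ)*W = (t0:ℝ) := by push_cast; ring
    simp only [hf, this]
    exact aamp_le_one hk ht0R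
  have hfN : 0 ≤ f (N+1) := by
    apply aamp_nonneg
    have : (0:ℝ) ≤ ((N+1:ℕ):ℝ)*W := by positivity
    linarith
  have hmid : (2*Real.pi*|β| / W) * ((X+Y) - (t0:ℝ)) ≤ 2*Real.pi*|β| * Y/W := by
    have h1 : (X+Y) - (t0:ℝ) ≤ Y := by linarith
    have h2 : (0:ℝ) ≤ 2*Real.pi*|β| / W := by positivity
    calc (2*Real.pi*|β| / W) * ((X+Y) - (t0:ℝ)) ≤ (2*Real.pi*|β| / W) * Y :=
          mul_le_mul_of_nonneg_left h1 h2
      _ = 2*Real.pi*|β| * Y/W := by ring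
  have hlast : ((N:ℝ)+1) - (1/(W:ℝ)) * ((X+Y) - (t0:ℝ)) ≤ 1 := by
    have h1 : (N:ℝ)*W ≤ (X+Y) - (t0:ℝ) := by linarith
    have h2 : (N:ℝ) ≤ (1/(W:ℝ)) * ((X+Y) - (t0:ℝ)) := by
      rw [one_div, inv_mul_eq_div, le_div_iff₀ hW0]
      linarith
    linarith
  calc ‖_‖ = ‖∑ j ∈ Finset.range (N+1),
        (gf k W β ((t0:ℝ) + j*W) - (1/(W:ℂ)) * ∫ u in (c j)..(c (j+1)), gf k W β u)‖ := by
        rw [hdecomp]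
    _ ≤ ∑ j ∈ Finset.range (N+1),
        ‖gf k W β ((t0:ℝ) + j*W) - (1/(W:ℂ)) * ∫ u in (c j)..(c (j+1)), gf k W β u‖ := by
        simpa using norm_sum_le (Finset.range (N+1))
          (fun j => gf k W β ((t0:ℝ) + j*W) - (1/(W:ℂ)) * ∫ u in (c j)..(c (j+1)), gf k W β u)
    _ ≤ ∑ j ∈ Finset.range (N+1), B j := Finset.sum_le_sum hper
    _ ≤ 2 + 2*Real.pi*|β| * Y/W := by
        rw [hsum]
        push_cast
        linarith

lemma t0_mod (b : ℕ) (W : ℕ) (hW : 1 ≤ W) (A : ℤ) :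
    (A + 1 + ((b:ℤ) - A - 1) % W) % W = (b:ℤ) % W := by
  have h3 : A + 1 + ((b:ℤ) - A - 1) % W = (b:ℤ) - (W:ℤ) * (((b:ℤ)-A-1)/W) := by
    have := Int.mul_ediv_add_emod ((b:ℤ)-A-1) W
    linarith
  rw [h3]
  simp [Int.sub_emod, Int.mul_emod_right]

lemma filter_eq_image (b W : ℕ) (hW : 1 ≤ W) (A B : ℤ) (t0 : ℤ)
    (ht0 : t0 = A + 1 + ((b:ℤ) - A - 1) % W) (hne : t0 ≤ B) :
    (Finset.Ioc A B).filter (fun t => t % (W:ℤ) = (b:ℤ) % W)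
      = (Finset.range (((B - t0)/W).toNat + 1)).image (fun j : ℕ => t0 + j*W) := by
  have hW0 : (0:ℤ) < W := by exact_mod_cast hW
  have hmodnn : 0 ≤ ((b:ℤ) - A - 1) % W := Int.emod_nonneg _ hW0.ne'
  have hmodlt : ((b:ℤ) - A - 1) % W < W := Int.emod_lt_of_pos _ hW0
  have ht0A : A < t0 := by omega
  have ht0A2 : t0 ≤ A + W := by omega
  have ht0m : t0 % W = (b:ℤ) % W := ht0 ▸ t0_mod b W hW A
  have hNnn : 0 ≤ (B - t0)/W := Int.ediv_nonneg (by omega) hW0.le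
  ext t
  simp only [Finset.mem_filter, Finset.mem_Ioc, Finset.mem_image, Finset.mem_range]
  constructor
  · rintro ⟨⟨h1, h2⟩, h3⟩
    have hdvd : (W:ℤ) ∣ t - t0 := Int.ModEq.dvd (ht0m.trans h3.symm)
    obtain ⟨m, hm⟩ := hdvd
    have hm0 : 0 ≤ m := by
      by_contra h
      push_neg at h
      have h4 : m ≤ -1 := by omega
      have : (W:ℤ)*m ≤ (W:ℤ)*(-1) := by
        apply mul_le_mul_of_nonneg_left h4 hW0.le
      omega
    have hmle : m ≤ (B - t0)/W := by
      rw [Int.le_ediv_iff_mul_le hW0]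
      nlinarith
    refine ⟨m.toNat, by omega, ?_⟩
    have : (m.toNat : ℤ) = m := Int.toNat_of_nonneg hm0
    rw [this]
    have hm2 : t - t0 = m * W := by rw [hm]; ring
    omega
  · rintro ⟨j, hj, rfl⟩
    have hjle : (j:ℤ) ≤ (B - t0)/W := by omega
    have hjW : (j:ℤ)*W ≤ B - t0 := by
      calc (j:ℤ)*W ≤ (B - t0)/W * W := by
            apply mul_le_mul_of_nonneg_right hjle hW0.le
        _ ≤ B - t0 := Int.ediv_mul_le _ hW0.ne'
    have hjnn : (0:ℤ) ≤ (j:ℤ)*W := by positivity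
    refine ⟨⟨by omega, by omega⟩, ?_⟩
    rw [Int.add_mul_emod_self_right, ht0m]

lemma change_var (k W d : ℕ) (hk : 1 ≤ k) (hd : 1 ≤ d) (β X Y : ℝ) (hX : 0 < X) (hY : 0 < Y) :
    (∫ γ in (X ^ ((1:ℝ)/k) / d)..((X + Y) ^ ((1:ℝ)/k) / d),
        Complex.exp (2 * Real.pi * Complex.I * ((β * (d:ℝ) ^ k * γ ^ k / W : ℝ) : ℂ)))
      = (1/(d:ℝ)) • ∫ u in X..(X+Y), gf k W β u := by
  have hd0 : (0:ℝ) < d := by exact_mod_cast hd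
  have hk0 : (k:ℝ) ≠ 0 := by positivity
  set a := X ^ ((1:ℝ)/k) / d with ha
  set bb := (X + Y) ^ ((1:ℝ)/k) / d with hbb
  have ha0 : 0 < a := by rw [ha]; positivity
  have hab : a ≤ bb := by
    rw [ha, hbb]
    exact (div_le_div_iff_of_pos_right hd0).mpr (Real.rpow_le_rpow hX.le (by linarith) (by positivity))
  have huIcc : Set.uIcc a bb = Set.Icc a bb := Set.uIcc_of_le hab
  set f : ℝ → ℝ := fun γ => ((d:ℝ)*γ)^k with hf
  set f' : ℝ → ℝ := fun γ => (k:ℝ) * ((d:ℝ)*γ)^(k-1) * d with hf'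
  have hder : ∀ γ ∈ Set.uIcc a bb, HasDerivAt f (f' γ) γ := by
    intro γ _
    have h1 : HasDerivAt (fun γ:ℝ => (d:ℝ)*γ) d γ := by
      simpa using (hasDerivAt_id γ).const_mul (d:ℝ)
    exact h1.pow k
  have hfc' : ContinuousOn f' (Set.uIcc a bb) := by fun_prop
  have himg : f '' Set.uIcc a bb ⊆ Set.Ioi (0:ℝ) := by
    rintro _ ⟨γ, hγ, rfl⟩
    rw [huIcc] at hγ
    have : 0 < γ := lt_of_lt_of_le ha0 hγ.1
    simp only [hf, Set.mem_Ioi]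
    positivity
  have hgc : ContinuousOn (gf k W β) (f '' Set.uIcc a bb) := (gf_contOn k W β).mono himg
  have hcv := intervalIntegral.integral_comp_smul_deriv' hder hfc' hgc
  have hfa : f a = X := by
    simp only [hf, ha]
    rw [mul_div_cancel₀ _ hd0.ne']
    rw [← Real.rpow_natCast (X ^ ((1:ℝ)/k)) k, ← Real.rpow_mul hX.le]
    rw [show (1:ℝ)/k * k = 1 by field_simp]
    exact Real.rpow_one X
  have hfb : f bb = X + Y := by
    simp only [hf, hbb]
    rw [mul_div_cancel₀ _ hd0.ne']
    rw [← Real.rpow_natCast ((X+Y) ^ ((1:ℝ)/k)) k, ← Real.rpow_mul (by linarith)]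
    rw [show (1:ℝ)/k * k = 1 by field_simp]
    exact Real.rpow_one (X+Y)
  rw [hfa, hfb] at hcv
  -- pointwise identity on uIcc
  have hpt : Set.EqOn
      (fun γ => Complex.exp (2 * Real.pi * Complex.I * ((β * (d:ℝ) ^ k * γ ^ k / W : ℝ) : ℂ)))
      (fun γ => (1/(d:ℝ)) • (f' γ • gf k W β (f γ))) (Set.uIcc a bb) := by
    intro γ hγ
    rw [huIcc] at hγ
    have hγ0 : 0 < γ := lt_of_lt_of_le ha0 hγ.1
    set y : ℝ := (d:ℝ)*γ with hy
    have hy0 : 0 < y := by positivity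
    have hamp : f' γ * ((1 / k : ℝ) * (f γ) ^ ((1 : ℝ) / k - 1)) = d := by
      simp only [hf, hf', ← hy]
      rw [← Real.rpow_natCast y k, ← Real.rpow_mul hy0.le,
        show (k:ℝ) * ((1:ℝ)/k - 1) = 1 - k by field_simp]
      rw [show y ^ (k-1) = y ^ (((k-1:ℕ):ℝ)) by rw [Real.rpow_natCast]]
      rw [show ((k-1:ℕ):ℝ) = (k:ℝ) - 1 by
        have : (1:ℕ) ≤ k := hk
        push_cast [Nat.cast_sub this]
        ring]
      rw [show (k:ℝ) * y ^ ((k:ℝ) - 1) * d * ((1/k:ℝ) * y ^ ((1:ℝ) - k))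
          = (d:ℝ) * ((k:ℝ) * (1/k:ℝ)) * (y ^ ((k:ℝ) - 1) * y ^ ((1:ℝ) - k)) by ring]
      rw [← Real.rpow_add hy0, show (k:ℝ) - 1 + (1 - k) = 0 by ring, Real.rpow_zero]
      field_simp
    have hphase : β * (d:ℝ) ^ k * γ ^ k / W = β * (f γ) / W := by
      simp only [hf]
      rw [mul_pow]
      ring
    simp only [hphase]
    show Complex.exp (2 * Real.pi * Complex.I * ((β * (f γ) / W : ℝ) : ℂ))
        = (1/(d:ℝ)) • (f' γ • gf k W β (f γ))
    rw [show gf k W β (f γ) = (((1 / k : ℝ) * (f γ) ^ ((1 : ℝ) / k - 1) : ℝ) : ℂ) *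
        Complex.exp (2 * Real.pi * Complex.I * ((β * (f γ) / W : ℝ) : ℂ)) from rfl]
    rw [Complex.real_smul, Complex.real_smul]
    rw [show ((f' γ : ℝ):ℂ) * ((((1 / k : ℝ) * (f γ) ^ ((1 : ℝ) / k - 1) : ℝ) : ℂ) *
        Complex.exp (2 * Real.pi * Complex.I * ((β * (f γ) / W : ℝ) : ℂ)))
        = (((f' γ * ((1 / k : ℝ) * (f γ) ^ ((1 : ℝ) / k - 1)) : ℝ) : ℂ)) *
          Complex.exp (2 * Real.pi * Complex.I * ((β * (f γ) / W : ℝ) : ℂ)) by push_cast; ring]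
    rw [hamp]
    rw [show ((((1:ℝ)/(d:ℝ)) : ℝ):ℂ) * (((d:ℝ):ℂ) *
        Complex.exp (2 * Real.pi * Complex.I * ((β * (f γ) / W : ℝ) : ℂ)))
        = ((((1:ℝ)/(d:ℝ) * d : ℝ)):ℂ) *
          Complex.exp (2 * Real.pi * Complex.I * ((β * (f γ) / W : ℝ) : ℂ)) by push_cast; ring]
    rw [show (1:ℝ)/(d:ℝ) * d = 1 by field_simp]
    simp
  calc (∫ γ in a..bb,
        Complex.exp (2 * Real.pi * Complex.I * ((β * (d:ℝ) ^ k * γ ^ k / W : ℝ) : ℂ)))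
      = ∫ γ in a..bb, (1/(d:ℝ)) • (f' γ • gf k W β (f γ)) :=
        intervalIntegral.integral_congr hpt
    _ = (1/(d:ℝ)) • ∫ γ in a..bb, f' γ • gf k W β (f γ) := intervalIntegral.integral_smul _ _
    _ = (1/(d:ℝ)) • ∫ u in X..(X+Y), gf k W β u := by rw [← hcv]; rfl

lemma real_rpow_subadd {x y p : ℝ} (hx : 0 ≤ x) (hy : 0 ≤ y) (hp : 0 ≤ p) (hp1 : p ≤ 1) :
    (x + y) ^ p ≤ x ^ p + y ^ p := by
  have h := NNReal.rpow_add_le_add_rpow (x.toNNReal) (y.toNNReal) hp hp1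
  have h2 := NNReal.coe_le_coe.mpr h
  push_cast [NNReal.coe_rpow] at h2
  rwa [Real.coe_toNNReal _ hx, Real.coe_toNNReal _ hy] at h2

lemma rpow_diff_le_W {k W : ℕ} (hk : 1 ≤ k) (hW : 1 ≤ W) {p q : ℝ} (hp : 0 ≤ p)
    (hpq : p ≤ q) (hq : q ≤ p + W) : q ^ ((1:ℝ)/k) - p ^ ((1:ℝ)/k) ≤ (W:ℝ) := by
  have hW0 : (0:ℝ) < W := by exact_mod_cast hW
  have hkR : (1:ℝ) ≤ (k:ℝ) := by exact_mod_cast hk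
  have hinv1 : (1:ℝ)/k ≤ 1 := by rw [div_le_one (by linarith)]; exact hkR
  have hinv0 : (0:ℝ) ≤ 1/k := by positivity
  have h1 : q ^ ((1:ℝ)/k) ≤ (p + W) ^ ((1:ℝ)/k) :=
    Real.rpow_le_rpow (by linarith) hq (by positivity)
  have h2 : (p + (W:ℝ)) ^ ((1:ℝ)/k) ≤ p ^ ((1:ℝ)/k) + (W:ℝ) ^ ((1:ℝ)/k) :=
    real_rpow_subadd hp hW0.le hinv0 hinv1
  have h3 : (W:ℝ) ^ ((1:ℝ)/k) ≤ (W:ℝ) := by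
    calc (W:ℝ) ^ ((1:ℝ)/k) ≤ (W:ℝ) ^ (1:ℝ) :=
          Real.rpow_le_rpow_of_exponent_le (by exact_mod_cast hW) hinv1
      _ = W := Real.rpow_one _
  linarith

lemma filter_empty (b W : ℕ) (hW : 1 ≤ W) (A B : ℤ) (t0 : ℤ)
    (ht0 : t0 = A + 1 + ((b:ℤ) - A - 1) % W) (hgt : B < t0) :
    (Finset.Ioc A B).filter (fun t => t % (W:ℤ) = (b:ℤ) % W) = ∅ := by
  have hW0 : (0:ℤ) < W := by exact_mod_cast hW
  have hmodnn : 0 ≤ ((b:ℤ) - A - 1) % W := Int.emod_nonneg _ hW0.ne'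
  have hmodlt : ((b:ℤ) - A - 1) % W < W := Int.emod_lt_of_pos _ hW0
  rw [Finset.filter_eq_empty_iff]
  intro t ht
  rw [Finset.mem_Ioc] at ht
  intro hmod
  have ht0m : t0 % W = (b:ℤ) % W := ht0 ▸ t0_mod b W hW A
  have hdvd : (W:ℤ) ∣ t - t0 := Int.ModEq.dvd (ht0m.trans hmod.symm)
  obtain ⟨m, hm⟩ := hdvd
  have hm2 : t - t0 = m * W := by rw [hm]; ring
  have hmneg : m ≤ -1 := by
    by_contra h
    push_neg at h
    have h2 : 0 ≤ m := by omega
    have := mul_nonneg h2 hW0.le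
    omega
  have : m * W ≤ -1 * W := mul_le_mul_of_nonneg_right hmneg hW0.le
  omega

lemma key_est (k b W : ℕ) (hk : 1 ≤ k) (hW : 1 ≤ W) (β X Y : ℝ) (hX : 0 < X) (hY : 0 < Y) :
    ‖(
      (∑ t ∈ (Finset.Ioc ⌊X⌋ ⌊X + Y⌋).filter (fun t => t % (W : ℤ) = (b : ℤ) % (W : ℤ)),
          gf k W β (t : ℝ))
        - (1/(W:ℂ)) * ∫ u in X..(X+Y), gf k W β u)‖
      ≤ 3 + 2*Real.pi*|β| * Y/W := by
  have hW0Z : (0:ℤ) < W := by exact_mod_cast hW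
  have hW0 : (0:ℝ) < W := by exact_mod_cast hW
  set A : ℤ := ⌊X⌋ with hA
  set Bf : ℤ := ⌊X + Y⌋ with hBf
  set t0 : ℤ := A + 1 + ((b:ℤ) - A - 1) % W with ht0d
  have hA0 : 0 ≤ A := Int.floor_nonneg.mpr hX.le
  have hmodnn : 0 ≤ ((b:ℤ) - A - 1) % W := Int.emod_nonneg _ hW0Z.ne'
  have hmodlt : ((b:ℤ) - A - 1) % W < W := Int.emod_lt_of_pos _ hW0Z
  have ht0A : A < t0 := by omega
  have ht0AW : t0 ≤ A + W := by omega
  have ht1 : (1:ℤ) ≤ t0 := by omega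
  have hXA : (A:ℝ) ≤ X := Int.floor_le X
  have hXA1 : X < (A:ℝ) + 1 := Int.lt_floor_add_one X
  have hXt0 : X < (t0:ℝ) := by
    have h1 : (A:ℝ) + 1 ≤ (t0:ℝ) := by exact_mod_cast ht0A
    linarith
  have ht0X : (t0:ℝ) ≤ X + W := by
    have h1 : (t0:ℝ) ≤ (A:ℝ) + W := by exact_mod_cast ht0AW
    linarith
  have ht1R : (1:ℝ) ≤ (t0:ℝ) := by exact_mod_cast ht1
  have hBfle : (Bf:ℝ) ≤ X + Y := Int.floor_le _
  have hBfgt : X + Y < (Bf:ℝ) + 1 := Int.lt_floor_add_one _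
  have hβnn : (0:ℝ) ≤ 2*Real.pi*|β| * Y/W := by positivity
  by_cases hcase : t0 ≤ Bf
  · set N : ℕ := ((Bf - t0)/W).toNat with hN
    have hNZ : (N:ℤ) = (Bf - t0)/W :=
      Int.toNat_of_nonneg (Int.ediv_nonneg (by omega) hW0Z.le)
    have himg := filter_eq_image b W hW A Bf t0 ht0d hcase
    have hsum : (∑ t ∈ (Finset.Ioc A Bf).filter (fun t => t % (W : ℤ) = (b : ℤ) % (W : ℤ)),
          gf k W β (t : ℝ))
        = ∑ j ∈ Finset.range (N+1), gf k W β ((t0:ℝ) + j*W) := by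
      rw [himg, Finset.sum_image]
      · apply Finset.sum_congr rfl
        intro j _
        congr 1
        push_cast
        ring
      · intro x _ y _ h
        have h2 : (x:ℤ)*W = (y:ℤ)*W := by linarith
        have h3 : (x:ℤ) = y := mul_right_cancel₀ (by exact_mod_cast hW0Z.ne') h2
        exact_mod_cast h3
    have htNZ : t0 + (N:ℤ)*W ≤ Bf := by
      have h1 : ((Bf - t0)/W)*W ≤ Bf - t0 := Int.ediv_mul_le _ hW0Z.ne'
      rw [hNZ]
      linarith
    have htN : (t0:ℝ) + N*W ≤ X + Y := by
      calc (t0:ℝ) + N*W = ((t0 + (N:ℤ)*W : ℤ) : ℝ) := by push_cast; ring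
        _ ≤ (Bf:ℝ) := by exact_mod_cast htNZ
        _ ≤ X + Y := hBfle
    have htN2Z : Bf < t0 + (N:ℤ)*W + W := by
      have h1 := Int.lt_ediv_add_one_mul_self (Bf - t0) hW0Z
      rw [add_mul, one_mul] at h1
      rw [hNZ]
      linarith
    have htN2 : X + Y < (t0:ℝ) + N*W + W := by
      calc X + Y < (Bf:ℝ) + 1 := hBfgt
        _ ≤ (t0:ℝ) + N*W + W := by
            have h1 : Bf + 1 ≤ t0 + (N:ℤ)*W + W := htN2Z
            calc (Bf:ℝ) + 1 = ((Bf + 1 : ℤ):ℝ) := by push_cast; ring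
              _ ≤ ((t0 + (N:ℤ)*W + W : ℤ):ℝ) := by exact_mod_cast h1
              _ = (t0:ℝ) + N*W + W := by push_cast; ring
    have hms := main_sum k W hk hW β X Y hX hY t0 N hXt0 ht1 htN htN2
    have hi1 : IntervalIntegrable (gf k W β) MeasureTheory.volume X (t0:ℝ) :=
      gf_integrable k W β hX (by linarith)
    have hi2 : IntervalIntegrable (gf k W β) MeasureTheory.volume (t0:ℝ) (X+Y) :=
      gf_integrable k W β (by linarith) (by linarith)
    have hsplit := intervalIntegral.integral_add_adjacent_intervals hi1 hi2
    have hb : ‖(1/(W:ℂ)) * ∫ u in X..(t0:ℝ), gf k W β u‖ ≤ 1 := by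
      rw [norm_mul]
      have h1 : ‖(1/(W:ℂ))‖ = 1/(W:ℝ) := by
        rw [norm_div, norm_one, Complex.norm_natCast]
      rw [h1]
      have h2 := gf_int_bound k W β hk hX (by linarith : X ≤ (t0:ℝ))
      have h3 : (t0:ℝ) ^ ((1:ℝ)/k) - X ^ ((1:ℝ)/k) ≤ W :=
        rpow_diff_le_W hk hW hX.le (by linarith) (by linarith)
      calc 1/(W:ℝ) * ‖∫ u in X..(t0:ℝ), gf k W β u‖ ≤ 1/(W:ℝ) * W :=
            mul_le_mul_of_nonneg_left (h2.trans h3) (by positivity)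
        _ = 1 := by field_simp
    rw [hsum]
    have hrw : (∑ j ∈ Finset.range (N+1), gf k W β ((t0:ℝ)+j*W))
          - (1/(W:ℂ)) * ∫ u in X..(X+Y), gf k W β u
        = ((∑ j ∈ Finset.range (N+1), gf k W β ((t0:ℝ)+j*W))
            - (1/(W:ℂ)) * ∫ u in (t0:ℝ)..(X+Y), gf k W β u)
          - (1/(W:ℂ)) * ∫ u in X..(t0:ℝ), gf k W β u := by
      rw [← hsplit]
      ring
    rw [hrw]
    calc ‖_‖
        ≤ ‖(∑ j ∈ Finset.range (N+1), gf k W β ((t0:ℝ)+j*W))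
            - (1/(W:ℂ)) * ∫ u in (t0:ℝ)..(X+Y), gf k W β u‖
          + ‖(1/(W:ℂ)) * ∫ u in X..(t0:ℝ), gf k W β u‖ := by
          exact norm_sub_le
            ((∑ j ∈ Finset.range (N+1), gf k W β ((t0:ℝ)+j*W))
              - (1/(W:ℂ)) * ∫ u in (t0:ℝ)..(X+Y), gf k W β u)
            ((1/(W:ℂ)) * ∫ u in X..(t0:ℝ), gf k W β u)
      _ ≤ (2 + 2*Real.pi*|β| * Y/W) + 1 := add_le_add hms hb
      _ = 3 + 2*Real.pi*|β| * Y/W := by ring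
  · have hempty := filter_empty b W hW A Bf t0 ht0d (by omega)
    rw [hempty]
    simp only [Finset.sum_empty, zero_sub]
    rw [norm_neg, norm_mul]
    have h1 : ‖(1/(W:ℂ))‖ = 1/(W:ℝ) := by
      rw [norm_div, norm_one, Complex.norm_natCast]
    rw [h1]
    have hYW : Y < (W:ℝ) := by
      have h2 : Bf + 1 ≤ t0 := by omega
      have h3 : ((Bf:ℝ)) + 1 ≤ (t0:ℝ) := by exact_mod_cast h2
      linarith
    have h2 := gf_int_bound k W β hk hX (by linarith : X ≤ X+Y)
    have h3 : (X+Y) ^ ((1:ℝ)/k) - X ^ ((1:ℝ)/k) ≤ W :=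
      rpow_diff_le_W hk hW hX.le (by linarith) (by linarith)
    calc 1/(W:ℝ) * ‖∫ u in X..(X+Y), gf k W β u‖ ≤ 1/(W:ℝ) * W :=
          mul_le_mul_of_nonneg_left (h2.trans h3) (by positivity)
      _ = 1 := by field_simp
      _ ≤ 3 + 2*Real.pi*|β| * Y/W := by linarith

theorem stmt_6 :
    ∃ C > 0, ∀ (k b W d : ℕ), 1 ≤ k → 1 ≤ W → 1 ≤ d →
      ∀ (β X Y : ℝ), 0 < X → 0 < Y →
      ‖(
        (∑ t ∈ (Finset.Ioc ⌊X⌋ ⌊X + Y⌋).filter (fun t => t % (W : ℤ) = (b : ℤ) % (W : ℤ)),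
            (((1 / k : ℝ) * (t : ℝ) ^ ((1 : ℝ) / k - 1) : ℝ) : ℂ) *
              Complex.exp (2 * Real.pi * Complex.I * ((β * (t : ℝ) / W : ℝ) : ℂ))) / (d : ℂ)
        - (1 / (W : ℂ)) *
            ∫ γ in (X ^ ((1 : ℝ) / k) / d)..((X + Y) ^ ((1 : ℝ) / k) / d),
              Complex.exp (2 * Real.pi * Complex.I * ((β * (d : ℝ) ^ k * γ ^ k / W : ℝ) : ℂ)))‖
      ≤ C * (|β| * Y / (d * W) + 1 / d) := by
  refine ⟨100, by norm_num, ?_⟩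
  intro k b W d hk hW hd β X Y hX hY
  have hW0 : (0:ℝ) < W := by exact_mod_cast hW
  have hd0 : (0:ℝ) < d := by exact_mod_cast hd
  have hcv := change_var k W d hk hd β X Y hX hY
  have hkey := key_est k b W hk hW β X Y hX hY
  have e1 : (∑ t ∈ (Finset.Ioc ⌊X⌋ ⌊X + Y⌋).filter
        (fun t => t % (W : ℤ) = (b : ℤ) % (W : ℤ)),
      (((1 / k : ℝ) * (t : ℝ) ^ ((1 : ℝ) / k - 1) : ℝ) : ℂ) *
        Complex.exp (2 * Real.pi * Complex.I * ((β * (t : ℝ) / W : ℝ) : ℂ)))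
      = ∑ t ∈ (Finset.Ioc ⌊X⌋ ⌊X + Y⌋).filter
        (fun t => t % (W : ℤ) = (b : ℤ) % (W : ℤ)), gf k W β (t : ℝ) := rfl
  rw [e1, hcv]
  have e2 : (∑ t ∈ (Finset.Ioc ⌊X⌋ ⌊X + Y⌋).filter
        (fun t => t % (W : ℤ) = (b : ℤ) % (W : ℤ)), gf k W β (t : ℝ)) / (d:ℂ)
      - (1/(W:ℂ)) * ((1/(d:ℝ)) • (∫ u in X..(X+Y), gf k W β u))
      = (1/(d:ℂ)) * ((∑ t ∈ (Finset.Ioc ⌊X⌋ ⌊X + Y⌋).filter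
          (fun t => t % (W : ℤ) = (b : ℤ) % (W : ℤ)), gf k W β (t : ℝ))
        - (1/(W:ℂ)) * ∫ u in X..(X+Y), gf k W β u) := by
    rw [Complex.real_smul]
    push_cast
    ring
  rw [e2, norm_mul]
  have e3 : ‖(1/(d:ℂ))‖ = 1/(d:ℝ) := by
    rw [norm_div, norm_one, Complex.norm_natCast]
  rw [e3]
  have hP : (0:ℝ) ≤ |β| * Y / (d * W) := by positivity
  have hπ : Real.pi ≤ 4 := Real.pi_le_four
  calc 1/(d:ℝ) * ‖_‖ ≤ 1/(d:ℝ) * (3 + 2*Real.pi*|β| * Y/W) :=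
        mul_le_mul_of_nonneg_left hkey (by positivity)
    _ = 3*(1/(d:ℝ)) + 2*Real.pi*(|β| * Y / (d * W)) := by field_simp
    _ ≤ 100 * (|β| * Y / (d * W) + 1 / d) := by
        have h1 : 2*Real.pi*(|β| * Y / (d * W)) ≤ 8*(|β| * Y / (d * W)) := by
          apply mul_le_mul_of_nonneg_right _ hP
          linarith
        have h2 : (0:ℝ) < 1/d := by positivity
        linarith
end

section
/- Let $D \geq 2$ and let $\mathcal{D}^+$ be the set of squarefree integers $d = p_1 p_2 \cdots p_r$ with primes $p_r < \dots < p_1 < D$ such that for every odd $m \leq r$, $(p_1 \cdots p_m)^{1/2} p_m < D^{1/2}$ (with $d = 1$ included). Let $a \leq D$ be a natural number. Then $\sum_{d \mid P(D),\, (d,a) = 1,\, d \in \mathcal{D}^+} \frac{\mu(d)}{d} \gg \frac{a}{\phi(a)} \cdot \frac{1}{\log D}$, where $P(D) = \prod_{p < D} p$. -/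
/-- Membership in the set `𝒟⁺` of the upper-bound linear sieve with level `D`:
`d = p₁ p₂ ⋯ p_r` with primes `p_r < ⋯ < p₁ < D` such that for every odd `m ≤ r`
one has `p₁ ⋯ p_m · p_m² < D` (equivalently `(p₁⋯p_m)^{1/2} p_m < D^{1/2}`);
`d = 1` (the empty product) is included. -/
def DPlus (D d : ℕ) : Prop :=
  ∃ L : List ℕ, L.Chain' (· > ·) ∧ (∀ p ∈ L, p.Prime ∧ p < D) ∧ d = L.prod ∧
    ∀ m, Odd m → m ≤ L.length → (L.take m).prod * (L.getD (m - 1) 0) ^ 2 < D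

namespace Stmt12

open Finset

/-! ### Sorted descending lists of finsets -/

def sortedDesc (s : Finset ℕ) : List ℕ := s.sort (· ≥ ·)

lemma sortedDesc_sorted (s : Finset ℕ) : (sortedDesc s).Pairwise (· > ·) :=
  (Finset.sortedGT_sort s).pairwise

lemma mem_sortedDesc {s : Finset ℕ} {p : ℕ} : p ∈ sortedDesc s ↔ p ∈ s :=
  Finset.mem_sort _

lemma length_sortedDesc (s : Finset ℕ) : (sortedDesc s).length = s.card :=
  Finset.length_sort _

lemma nodup_sortedDesc (s : Finset ℕ) : (sortedDesc s).Nodup :=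
  Finset.sort_nodup _ _

lemma toFinset_sortedDesc (s : Finset ℕ) : (sortedDesc s).toFinset = s :=
  Finset.sort_toFinset _ _

lemma prod_sortedDesc (s : Finset ℕ) : (sortedDesc s).prod = ∏ p ∈ s, p := by
  have h : List.Perm (sortedDesc s) s.toList := Finset.sort_perm_toList _ _
  rw [h.prod_eq]
  have := Finset.prod_map_toList s id
  simpa using this

lemma eq_sortedDesc {L : List ℕ} (hL : L.Pairwise (· > ·)) : L = sortedDesc L.toFinset := by
  have hnd : L.Nodup := hL.nodup
  refine List.Perm.eq_of_pairwise (fun a b _ _ h1 h2 => by omega) hL (sortedDesc_sorted _) ?_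
  exact List.perm_of_nodup_nodup_toFinset_eq hnd (nodup_sortedDesc _)
    (toFinset_sortedDesc _).symm

lemma sortedDesc_union {A B : Finset ℕ} (hlt : ∀ x ∈ B, ∀ y ∈ A, x < y) :
    sortedDesc (A ∪ B) = sortedDesc A ++ sortedDesc B := by
  have hsorted : (sortedDesc A ++ sortedDesc B).Pairwise (· > ·) := by
    rw [List.pairwise_append]
    exact ⟨sortedDesc_sorted A, sortedDesc_sorted B,
      fun x hx y hy => hlt y (mem_sortedDesc.mp hy) x (mem_sortedDesc.mp hx)⟩
  have := eq_sortedDesc hsorted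
  rw [List.toFinset_append, toFinset_sortedDesc, toFinset_sortedDesc] at this
  exact this.symm

/-! ### Conditions -/

def condAt (D : ℕ) (L : List ℕ) (m : ℕ) : Prop :=
  (L.take m).prod * (L.getD (m - 1) 0) ^ 2 < D

def GoodL (D : ℕ) (L : List ℕ) : Prop := ∀ m, Odd m → m ≤ L.length → condAt D L m

lemma condAt_append {D : ℕ} {L₁ L₂ : List ℕ} {m : ℕ} (h1 : 1 ≤ m) (h2 : m ≤ L₁.length) :
    condAt D (L₁ ++ L₂) m ↔ condAt D L₁ m := by
  unfold condAt
  rw [List.take_append_of_le_length h2, List.getD_append _ _ _ _ (by omega)]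

lemma dplus_iff {D : ℕ} {s : Finset ℕ} (hs : ∀ p ∈ s, p.Prime ∧ p < D) :
    DPlus D (∏ p ∈ s, p) ↔ GoodL D (sortedDesc s) := by
  constructor
  · rintro ⟨L, hc, hp, hprod, hcond⟩
    have hsort : L.Pairwise (· > ·) := List.isChain_iff_pairwise.mp hc
    have hLfin : L.toFinset = s := by
      have h1 : L.prod = ∏ p ∈ L.toFinset, p := by
        rw [List.prod_toFinset _ hsort.nodup]
        simp
      have h2 : (∏ p ∈ L.toFinset, p).primeFactors = L.toFinset :=
        Nat.primeFactors_prod (fun p hp' => (hp p (List.mem_toFinset.mp hp')).1)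
      have h3 : (∏ p ∈ s, p).primeFactors = s :=
        Nat.primeFactors_prod (fun p hp' => (hs p hp').1)
      rw [← h2, ← h1, ← hprod, h3]
    have hL : L = sortedDesc s := by rw [← hLfin]; exact eq_sortedDesc hsort
    intro m hm hmle
    rw [← hL]
    exact hcond m hm (by rwa [hL])
  · intro hgood
    refine ⟨sortedDesc s, List.isChain_iff_pairwise.mpr (sortedDesc_sorted s), ?_, ?_, ?_⟩
    · intro p hp
      exact hs p (mem_sortedDesc.mp hp)
    · rw [prod_sortedDesc]
    · exact fun m hm hmle => hgood m hm hmle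

/-! ### Bad prefix machinery -/

def badSet (D : ℕ) (s : Finset ℕ) : Set ℕ :=
  {m | Odd m ∧ m ≤ s.card ∧ ¬ condAt D (sortedDesc s) m}

noncomputable def badIdx (D : ℕ) (s : Finset ℕ) : ℕ := sInf (badSet D s)

noncomputable def pre (D : ℕ) (s : Finset ℕ) : Finset ℕ :=
  ((sortedDesc s).take (badIdx D s)).toFinset

lemma badSet_nonempty {D : ℕ} {s : Finset ℕ} (h : ¬ GoodL D (sortedDesc s)) :
    (badSet D s).Nonempty := by
  unfold GoodL at h
  push_neg at h
  obtain ⟨m, hm1, hm2, hm3⟩ := h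
  exact ⟨m, hm1, by rwa [length_sortedDesc] at hm2, hm3⟩

def MinBad (D : ℕ) (t : Finset ℕ) : Prop :=
  t.Nonempty ∧ Odd t.card ∧ ¬ condAt D (sortedDesc t) t.card ∧
    ∀ m, Odd m → m < t.card → condAt D (sortedDesc t) m

/-- Structure of a bad set: it decomposes as its minimal bad prefix together with
a set of smaller elements. -/
lemma bad_structure {D : ℕ} {s : Finset ℕ} (h : ¬ GoodL D (sortedDesc s)) :
    pre D s ⊆ s ∧ MinBad D (pre D s) ∧ (pre D s).card = badIdx D s ∧
      (∀ x ∈ s \ pre D s, ∀ y ∈ pre D s, x < y) := by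
  classical
  have hne := badSet_nonempty h
  have hmem : badIdx D s ∈ badSet D s := Nat.sInf_mem hne
  obtain ⟨hodd, hle, hnc⟩ := hmem
  set m := badIdx D s with hm
  set L := sortedDesc s with hLdef
  have hm1 : 1 ≤ m := hodd.pos
  have hmL : m ≤ L.length := by rw [hLdef, length_sortedDesc]; exact hle
  -- take/drop split
  have hsplit : L.take m ++ L.drop m = L := List.take_append_drop m L
  have hsort : L.Pairwise (· > ·) := sortedDesc_sorted s
  have hpw : (L.take m ++ L.drop m).Pairwise (· > ·) := by rw [hsplit]; exact hsort
  rw [List.pairwise_append] at hpw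
  obtain ⟨hpw1, hpw2, hcross⟩ := hpw
  have htake_len : (L.take m).length = m := by
    rw [List.length_take]; omega
  -- sortedDesc of the take is itself
  have htake_eq : sortedDesc ((L.take m).toFinset) = L.take m := (eq_sortedDesc hpw1).symm
  have hdrop_eq : sortedDesc ((L.drop m).toFinset) = L.drop m := (eq_sortedDesc hpw2).symm
  have htake_card : ((L.take m).toFinset).card = m := by
    rw [List.toFinset_card_of_nodup hpw1.nodup, htake_len]
  have hpre_take : pre D s = (L.take m).toFinset := rfl
  -- pre ⊆ s
  have hsub : pre D s ⊆ s := by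
    rw [hpre_take]
    intro x hx
    rw [List.mem_toFinset] at hx
    have : x ∈ L := List.mem_of_mem_take hx
    rwa [hLdef, mem_sortedDesc] at this
  -- s \ pre = drop's toFinset
  have hdiff : ∀ x ∈ s \ pre D s, x ∈ L.drop m := by
    intro x hx
    rw [Finset.mem_sdiff] at hx
    have hxL : x ∈ L := by rw [hLdef, mem_sortedDesc]; exact hx.1
    rw [← hsplit, List.mem_append] at hxL
    rcases hxL with h1 | h1
    · exact absurd (by rw [hpre_take, List.mem_toFinset]; exact h1) hx.2
    · exact h1
  -- conditions transfer
  have hcondiff : ∀ k, 1 ≤ k → k ≤ m → (condAt D L k ↔ condAt D (L.take m) k) := by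
    intro k hk1 hk2
    conv_lhs => rw [← hsplit]
    exact condAt_append hk1 (by omega)
  refine ⟨hsub, ⟨?_, ?_, ?_, ?_⟩, htake_card, ?_⟩
  · rw [hpre_take, ← Finset.card_pos, htake_card]; omega
  · rw [hpre_take, htake_card]; exact hodd
  · rw [hpre_take, htake_eq, htake_card]
    intro hc
    exact hnc ((hcondiff m hm1 le_rfl).mpr hc)
  · intro k hk1 hk2
    rw [hpre_take, htake_eq]
    rw [hpre_take, htake_card] at hk2
    have hknotbad : k ∉ badSet D s := Nat.notMem_of_lt_sInf hk2
    have : condAt D L k := by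
      by_contra hc
      exact hknotbad ⟨hk1, by omega, hc⟩
    exact (hcondiff k hk1.pos (by omega)).mp this
  · intro x hx y hy
    have hxd : x ∈ L.drop m := hdiff x hx
    rw [hpre_take, List.mem_toFinset] at hy
    exact hcross y hy x hxd

/-- Conversely, glueing a minimal bad prefix to smaller elements yields a bad set with
that prefix. -/
lemma glue_bad {D : ℕ} {t f : Finset ℕ} (ht : MinBad D t)
    (hlt : ∀ x ∈ f, ∀ y ∈ t, x < y) :
    ¬ GoodL D (sortedDesc (t ∪ f)) ∧ pre D (t ∪ f) = t := by
  classical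
  obtain ⟨htne, htodd, htbad, htmin⟩ := ht
  have hdisj : Disjoint t f := by
    rw [Finset.disjoint_left]
    intro x hxt hxf
    exact lt_irrefl x (hlt x hxf x hxt)
  have hL : sortedDesc (t ∪ f) = sortedDesc t ++ sortedDesc f := sortedDesc_union hlt
  have hcard : (t ∪ f).card = t.card + f.card := Finset.card_union_of_disjoint hdisj
  have htlen : (sortedDesc t).length = t.card := length_sortedDesc t
  have ht1 : 1 ≤ t.card := htodd.pos
  have hcondiff : ∀ k, 1 ≤ k → k ≤ t.card →
      (condAt D (sortedDesc (t ∪ f)) k ↔ condAt D (sortedDesc t) k) := by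
    intro k hk1 hk2
    rw [hL]
    exact condAt_append hk1 (by omega)
  have hbad : ¬ GoodL D (sortedDesc (t ∪ f)) := by
    intro hg
    have := hg t.card htodd (by rw [length_sortedDesc]; omega)
    exact htbad ((hcondiff t.card ht1 le_rfl).mp this)
  have hbadidx : badIdx D (t ∪ f) = t.card := by
    have hmem : t.card ∈ badSet D (t ∪ f) := by
      refine ⟨htodd, by omega, ?_⟩
      intro hc
      exact htbad ((hcondiff t.card ht1 le_rfl).mp hc)
    apply le_antisymm (Nat.sInf_le hmem)
    by_contra hlt'
    push_neg at hlt'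
    have hne : (badSet D (t ∪ f)).Nonempty := ⟨_, hmem⟩
    obtain ⟨hodd', _, hnc'⟩ := Nat.sInf_mem hne
    exact hnc' ((hcondiff _ hodd'.pos (by omega)).mpr
      (htmin _ hodd' (by omega)))
  refine ⟨hbad, ?_⟩
  unfold pre
  rw [hbadidx, hL, ← htlen, List.take_left, toFinset_sortedDesc]

/-! ### The main combinatorial inequality -/

lemma sum_powerset_prod (P : Finset ℕ) (f : ℕ → ℝ) :
    ∑ s ∈ P.powerset, ∏ p ∈ s, f p = ∏ p ∈ P, (1 + f p) := by
  classical
  have := Finset.prod_add f (fun _ => (1:ℝ)) P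
  simp only [Finset.prod_const_one, mul_one] at this
  rw [← this]
  apply Finset.prod_congr rfl
  intro p _
  ring

open scoped Classical in
lemma sieve_lower (D : ℕ) (P : Finset ℕ) (hP : ∀ p ∈ P, p.Prime) :
    ∏ p ∈ P, (1 - (p:ℝ)⁻¹) ≤
      ∑ s ∈ P.powerset.filter (fun s => GoodL D (sortedDesc s)), ∏ p ∈ s, (-(p:ℝ)⁻¹) := by
  classical
  set w : Finset ℕ → ℝ := fun s => ∏ p ∈ s, (-(p:ℝ)⁻¹) with hw
  have htotal : ∑ s ∈ P.powerset, w s = ∏ p ∈ P, (1 - (p:ℝ)⁻¹) := by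
    rw [hw, sum_powerset_prod]
    apply Finset.prod_congr rfl
    intro p _
    ring
  have hsplit := Finset.sum_filter_add_sum_filter_not P.powerset
    (fun s => GoodL D (sortedDesc s)) w
  -- suffices that the bad part is nonpositive
  have hbad : ∑ s ∈ P.powerset.filter (fun s => ¬ GoodL D (sortedDesc s)), w s ≤ 0 := by
    set B := P.powerset.filter (fun s => ¬ GoodL D (sortedDesc s)) with hB
    have hmapsto : ∀ s ∈ B, pre D s ∈ B.image (pre D) :=
      fun s hs => Finset.mem_image_of_mem _ hs
    rw [← Finset.sum_fiberwise_of_maps_to hmapsto w]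
    apply Finset.sum_nonpos
    intro t ht
    -- t is a minimal bad set contained in P
    obtain ⟨s₀, hs₀B, hs₀t⟩ := Finset.mem_image.mp ht
    have hs₀ : s₀ ∈ P.powerset ∧ ¬ GoodL D (sortedDesc s₀) := by
      rw [hB, Finset.mem_filter] at hs₀B; exact hs₀B
    obtain ⟨hsub₀, hmb₀, _, _⟩ := bad_structure hs₀.2
    have htP : t ⊆ P := by rw [← hs₀t]; exact hsub₀.trans (Finset.mem_powerset.mp hs₀.1)
    have hmbt : MinBad D t := by rw [← hs₀t]; exact hmb₀
    have htne : t.Nonempty := hmbt.1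
    set M := t.min' htne with hM
    set F := (P.filter (fun x => x < M)).powerset with hF
    -- the fiber over t is the image of F under union with t
    have hfiber : B.filter (fun s => pre D s = t) = F.image (fun f => t ∪ f) := by
      ext s
      constructor
      · intro hs
        rw [Finset.mem_filter] at hs
        obtain ⟨hsB, hst⟩ := hs
        rw [hB, Finset.mem_filter] at hsB
        obtain ⟨hsP, hsbad⟩ := hsB
        obtain ⟨hsub, _, _, hlt⟩ := bad_structure hsbad
        rw [hst] at hsub hlt
        rw [Finset.mem_image]
        refine ⟨s \ t, ?_, Finset.union_sdiff_of_subset hsub⟩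
        rw [hF, Finset.mem_powerset]
        intro x hx
        rw [Finset.mem_filter]
        exact ⟨Finset.mem_powerset.mp hsP (Finset.mem_sdiff.mp hx).1,
          hlt x hx (t.min' htne) (Finset.min'_mem t htne)⟩
      · intro hs
        rw [Finset.mem_image] at hs
        obtain ⟨f, hfF, hfs⟩ := hs
        rw [hF, Finset.mem_powerset] at hfF
        have hlt : ∀ x ∈ f, ∀ y ∈ t, x < y := by
          intro x hx y hy
          have := (Finset.mem_filter.mp (hfF hx)).2
          calc x < M := this
            _ ≤ y := Finset.min'_le t y hy
        obtain ⟨hbad', hpre'⟩ := glue_bad hmbt hlt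
        rw [Finset.mem_filter, hB, Finset.mem_filter]
        refine ⟨⟨?_, ?_⟩, ?_⟩
        · rw [← hfs, Finset.mem_powerset]
          exact Finset.union_subset htP ((hfF).trans (Finset.filter_subset _ _))
        · rw [← hfs]; exact hbad'
        · rw [← hfs]; exact hpre'
    rw [hfiber]
    have hdisjtf : ∀ f ∈ F, Disjoint t f := by
      intro f hf
      rw [hF, Finset.mem_powerset] at hf
      rw [Finset.disjoint_left]
      intro x hxt hxf
      have h1 : x < M := (Finset.mem_filter.mp (hf hxf)).2
      have h2 : M ≤ x := Finset.min'_le t x hxt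
      omega
    rw [Finset.sum_image (by
      intro f₁ h₁ f₂ h₂ hef
      have e₁ := Finset.union_sdiff_cancel_left (hdisjtf f₁ h₁)
      have e₂ := Finset.union_sdiff_cancel_left (hdisjtf f₂ h₂)
      rw [← e₁, ← e₂, show t ∪ f₁ = t ∪ f₂ from hef])]
    have hsum : ∑ f ∈ F, w (t ∪ f) = w t * ∑ f ∈ F, w f := by
      rw [Finset.mul_sum]
      apply Finset.sum_congr rfl
      intro f hf
      rw [hw]
      exact Finset.prod_union (hdisjtf f hf)
    rw [hsum]
    have hwt : w t ≤ 0 := by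
      have heq : w t = (-1) ^ t.card * ∏ p ∈ t, (p:ℝ)⁻¹ := by
        rw [hw]
        simp only []
        rw [← Finset.prod_const (-1 : ℝ), ← Finset.prod_mul_distrib]
        apply Finset.prod_congr rfl
        intro p _
        ring
      rw [heq, (hmbt.2.1).neg_one_pow]
      have : (0:ℝ) ≤ ∏ p ∈ t, (p:ℝ)⁻¹ :=
        Finset.prod_nonneg (fun p _ => by positivity)
      nlinarith
    have hsumF : (0:ℝ) ≤ ∑ f ∈ F, w f := by
      have : ∑ f ∈ F, w f = ∏ p ∈ P.filter (fun x => x < M), (1 + -(p:ℝ)⁻¹) := by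
        rw [hw, hF]
        exact sum_powerset_prod _ _
      rw [this]
      apply Finset.prod_nonneg
      intro p hp
      have hprime : p.Prime := hP p (Finset.mem_filter.mp hp).1
      have h2 : (2:ℝ) ≤ p := by exact_mod_cast hprime.two_le
      have : (p:ℝ)⁻¹ ≤ 2⁻¹ := by
        apply inv_anti₀ (by norm_num) h2
      norm_num at this ⊢
      linarith
    exact mul_nonpos_iff.mpr (Or.inr ⟨hwt, hsumF⟩)
  linarith [hsplit, htotal.symm.le]



/-- Chebyshev-Mertens: sum of log p / p over primes up to n. -/
lemma cheb (n : ℕ) (hn : 2 ≤ n) :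
    ∑ p ∈ (range (n+1)).filter Nat.Prime, Real.log p / p ≤ Real.log n + Real.log 4 := by
  set S := (range (n+1)).filter Nat.Prime with hS
  have hmem : ∀ p ∈ S, p.Prime ∧ p ≤ n := by
    intro p hp
    rw [hS, mem_filter, mem_range] at hp
    exact ⟨hp.2, by omega⟩
  -- each p^(n/p) divides n!
  have h1 : ∀ p ∈ S, p ^ (n / p) ∣ n.factorial := by
    intro p hp
    obtain ⟨hp1, hp2⟩ := hmem p hp
    rw [Nat.Prime.pow_dvd_factorial_iff hp1 (Nat.lt_succ_self _)]
    have : 1 ∈ Finset.Ico 1 (Nat.log p n + 1) := by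
      simp [Nat.log_pos hp1.one_lt hp2]
    calc n / p = n / p ^ 1 := by norm_num
      _ ≤ _ := Finset.single_le_sum (f := fun i => n / p ^ i) (fun i _ => Nat.zero_le _) this
  -- the product divides n!
  have hprod : (∏ p ∈ S, p ^ (n / p)) ∣ n.factorial := by
    have hne : ∀ p ∈ S, p ^ (n / p) ≠ 0 := fun p hp =>
      pow_ne_zero _ (hmem p hp).1.ne_zero
    rw [← Nat.factorization_le_iff_dvd (Finset.prod_ne_zero_iff.mpr hne) n.factorial_ne_zero]
    rw [Nat.factorization_prod hne]
    intro q
    rw [Finset.sum_apply']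
    have : ∀ p ∈ S, (p ^ (n / p)).factorization q = if p = q then n / p else 0 := by
      intro p hp
      rw [(hmem p hp).1.factorization_pow, Finsupp.single_apply]
    rw [Finset.sum_congr rfl this]
    by_cases hq : q ∈ S
    · rw [Finset.sum_ite_eq' S q (fun p => n / p)]
      simp only [hq, if_true]
      exact (Nat.Prime.pow_dvd_iff_le_factorization (hmem q hq).1 n.factorial_ne_zero).mp
        (h1 q hq)
    · rw [Finset.sum_ite_eq' S q (fun p => n / p)]
      simp [hq]
  -- take logs
  have hn0 : (0:ℝ) < n := by positivity
  have hlogfact : Real.log (n.factorial) ≤ n * Real.log n := by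
    calc Real.log (n.factorial) ≤ Real.log (n ^ n) := by
          apply Real.log_le_log (by positivity)
          exact_mod_cast Nat.factorial_le_pow n
      _ = n * Real.log n := by rw [Real.log_pow]
  have hlogprod : ∑ p ∈ S, (n / p : ℕ) * Real.log p ≤ Real.log (n.factorial) := by
    have h0 : ∀ p ∈ S, ((p:ℝ)) ^ (n / p) ≠ 0 := fun p hp => by
      have := (hmem p hp).1.pos; positivity
    calc ∑ p ∈ S, (n / p : ℕ) * Real.log p
        = Real.log (∏ p ∈ S, (p:ℝ) ^ (n / p)) := by
          rw [Real.log_prod h0]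
          exact Finset.sum_congr rfl fun p hp => by rw [Real.log_pow]
      _ ≤ Real.log (n.factorial) := by
          have hcast : (∏ p ∈ S, (p:ℝ) ^ (n / p)) = ((∏ p ∈ S, p ^ (n / p) : ℕ) : ℝ) := by
            push_cast; rfl
          rw [hcast]
          apply Real.log_le_log
          · have : (0:ℕ) < ∏ p ∈ S, p ^ (n / p) :=
              Finset.prod_pos fun p hp => pow_pos (hmem p hp).1.pos _
            exact_mod_cast this
          · exact_mod_cast Nat.le_of_dvd n.factorial_pos hprod
  -- primorial bound
  have hprim : ∑ p ∈ S, Real.log p ≤ n * Real.log 4 := by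
    calc ∑ p ∈ S, Real.log p = Real.log (∏ p ∈ S, (p:ℝ)) := by
          rw [Real.log_prod]
          intro p hp
          exact_mod_cast (hmem p hp).1.ne_zero
      _ ≤ Real.log ((4:ℝ) ^ n) := by
          have hcast : (∏ p ∈ S, (p:ℝ)) = ((∏ p ∈ S, p : ℕ) : ℝ) := by push_cast; rfl
          rw [hcast]
          apply Real.log_le_log
          · have : 0 < ∏ p ∈ S, p := Finset.prod_pos fun p hp => (hmem p hp).1.pos
            exact_mod_cast this
          · exact_mod_cast primorial_le_4_pow n
      _ = n * Real.log 4 := by rw [Real.log_pow]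
  -- floor bound
  have hfloor : ∀ p ∈ S, ((n:ℝ) / p) * Real.log p - Real.log p ≤ (n / p : ℕ) * Real.log p := by
    intro p hp
    have hp2 := (hmem p hp).1.two_le
    have hpR : (0:ℝ) < p := by positivity
    have hlogp : 0 ≤ Real.log p := Real.log_nonneg (by exact_mod_cast hp2.trans' (by norm_num))
    have hcast : (n:ℝ) < p * ((n/p : ℕ) + 1) := by
      exact_mod_cast Nat.lt_mul_div_succ n (show 0 < p by omega)
    have : (n:ℝ) / p - 1 ≤ (n / p : ℕ) := by
      rw [sub_le_iff_le_add, div_le_iff₀ hpR]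
      nlinarith
    nlinarith [this, hlogp]
  have key : ∑ p ∈ S, ((n:ℝ) / p) * Real.log p ≤ n * Real.log n + n * Real.log 4 := by
    calc ∑ p ∈ S, ((n:ℝ) / p) * Real.log p
        ≤ ∑ p ∈ S, ((n / p : ℕ) * Real.log p + Real.log p) := by
          apply Finset.sum_le_sum
          intro p hp
          linarith [hfloor p hp]
      _ = (∑ p ∈ S, (n / p : ℕ) * Real.log p) + ∑ p ∈ S, Real.log p := by
          rw [Finset.sum_add_distrib]
      _ ≤ n * Real.log n + n * Real.log 4 := by
          have := hlogprod.trans hlogfact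
          linarith [hprim]
  have : (n:ℝ) * ∑ p ∈ S, Real.log p / p ≤ n * (Real.log n + Real.log 4) := by
    rw [Finset.mul_sum]
    calc ∑ p ∈ S, (n:ℝ) * (Real.log p / p) = ∑ p ∈ S, ((n:ℝ) / p) * Real.log p := by
          apply Finset.sum_congr rfl
          intro p hp
          ring
      _ ≤ n * Real.log n + n * Real.log 4 := key
      _ = n * (Real.log n + Real.log 4) := by ring
  exact le_of_mul_le_mul_left (by linarith) hn0


noncomputable def cc (n : ℕ) : ℝ := if n.Prime then Real.log n / n else 0
noncomputable def bb (n : ℕ) : ℝ := (Real.log n)⁻¹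

lemma SS_le (m : ℕ) (hm : 2 ≤ m) :
    ∑ i ∈ range (m+1), cc i ≤ Real.log m + Real.log 4 := by
  have : ∑ i ∈ range (m+1), cc i = ∑ p ∈ (range (m+1)).filter Nat.Prime, Real.log p / p := by
    rw [Finset.sum_filter]
    exact Finset.sum_congr rfl fun i _ => rfl
  rw [this]
  exact cheb m hm

lemma SS_nonneg (m : ℕ) : 0 ≤ ∑ i ∈ range m, cc i := by
  apply Finset.sum_nonneg
  intro i _
  unfold cc
  split
  · apply div_nonneg (Real.log_natCast_nonneg i) (by positivity)
  · exact le_refl 0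
lemma telescope (f : ℕ → ℝ) (a N : ℕ) (h : a ≤ N) :
    ∑ i ∈ Finset.Ico a N, (f (i+1) - f i) = f N - f a := by
  induction N with
  | zero => interval_cases a; simp
  | succ n ih =>
    rcases Nat.lt_or_ge a (n+1) with hlt | hge
    · have han : a ≤ n := by omega
      rw [Finset.sum_Ico_succ_top han, ih han]
      ring
    · have : a = n + 1 := by omega
      subst this
      simp

/-- Mertens' second theorem upper bound. -/
lemma primeRecip (N : ℕ) (hN : 2 ≤ N) :
    ∑ p ∈ (range (N+1)).filter Nat.Prime, ((p:ℝ))⁻¹ ≤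
      Real.log (Real.log N) + (1 + 2 * Real.log 4 / Real.log 2 - Real.log (Real.log 2)) := by
  have hlog2 : (0:ℝ) < Real.log 2 := Real.log_pos (by norm_num)
  have hlogN : Real.log 2 ≤ Real.log N := by
    apply Real.log_le_log (by norm_num)
    exact_mod_cast hN
  -- rewrite LHS
  have step1 : ∑ p ∈ (range (N+1)).filter Nat.Prime, ((p:ℝ))⁻¹
      = ∑ i ∈ range (N+1), bb i * cc i := by
    rw [Finset.sum_filter]
    apply Finset.sum_congr rfl
    intro i _
    by_cases hi : i.Prime
    · simp only [hi, if_true, cc, bb]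
      have h1 : (1:ℝ) < i := by exact_mod_cast hi.one_lt
      have hl : Real.log i ≠ 0 := ne_of_gt (Real.log_pos h1)
      field_simp
    · simp [hi, cc]
  rw [step1]
  -- Abel summation
  have habel := Finset.sum_range_by_parts bb cc (N+1)
  simp only [smul_eq_mul, Nat.add_sub_cancel] at habel
  set S : ℕ → ℝ := fun m => ∑ i ∈ range m, cc i with hSdef
  have habel' : (∑ i ∈ range (N+1), bb i * cc i)
      = bb N * S (N+1) - ∑ i ∈ range N, (bb (i+1) - bb i) * S (i+1) := habel
  rw [habel']
  -- first term
  have hterm1 : bb N * S (N+1) ≤ 1 + Real.log 4 / Real.log 2 := by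
    have hSle : S (N+1) ≤ Real.log N + Real.log 4 := SS_le N hN
    have hbbN : bb N = (Real.log N)⁻¹ := rfl
    have hlogNpos : 0 < Real.log N := lt_of_lt_of_le hlog2 hlogN
    calc bb N * S (N+1) ≤ (Real.log N)⁻¹ * (Real.log N + Real.log 4) := by
          rw [hbbN]
          apply mul_le_mul_of_nonneg_left hSle (by positivity)
      _ = 1 + Real.log 4 / Real.log N := by field_simp
      _ ≤ 1 + Real.log 4 / Real.log 2 := by
          have h4 : (0:ℝ) ≤ Real.log 4 := Real.log_nonneg (by norm_num)
          gcongr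
  -- the correction sum
  have hterm2 : ∑ i ∈ range N, (bb (i+1) - bb i) * S (i+1) ≥
      -(Real.log (Real.log N) - Real.log (Real.log 2) + Real.log 4 / Real.log 2) := by
    have key : ∑ i ∈ range N, (bb i - bb (i+1)) * S (i+1) ≤
        Real.log (Real.log N) - Real.log (Real.log 2) + Real.log 4 / Real.log 2 := by
      -- pointwise bound
      have hpt : ∀ i ∈ range N, (bb i - bb (i+1)) * S (i+1) ≤
          (if 2 ≤ i then (Real.log (Real.log (i+1)) - Real.log (Real.log i))
            + Real.log 4 * (bb i - bb (i+1)) else 0) := by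
        intro i _
        by_cases hi : 2 ≤ i
        · simp only [hi, if_true]
          have hlogi : 0 < Real.log i := Real.log_pos (by exact_mod_cast hi.trans_lt' one_lt_two)
          have hlogi1 : 0 < Real.log (i+1) := Real.log_pos (by
            have : (1:ℝ) < i := by exact_mod_cast hi.trans_lt' one_lt_two
            push_cast; linarith)
          have hmono : Real.log i ≤ Real.log (i+1) := by
            apply Real.log_le_log (by positivity)
            push_cast; linarith
          have hbbd : 0 ≤ bb i - bb (i+1) := by
            unfold bb
            push_cast
            rw [sub_nonneg]
            exact inv_anti₀ hlogi hmono
          have hScheb : S (i+1) ≤ Real.log i + Real.log 4 := SS_le i hi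
          have hSnn : 0 ≤ S (i+1) := SS_nonneg (i+1)
          have h1 : (bb i - bb (i+1)) * S (i+1) ≤ (bb i - bb (i+1)) * (Real.log i + Real.log 4) :=
            mul_le_mul_of_nonneg_left hScheb hbbd
          have h2 : (bb i - bb (i+1)) * Real.log i ≤
              Real.log (Real.log (i+1)) - Real.log (Real.log i) := by
            have hexp : bb i - bb (i+1) = (Real.log (i+1) - Real.log i)
                / (Real.log i * Real.log (i+1)) := by
              unfold bb
              push_cast
              field_simp
            rw [hexp]
            have hratio : (Real.log (i+1) - Real.log i) / (Real.log i * Real.log (i+1)) * Real.log i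
                = 1 - Real.log i / Real.log (i+1) := by
              field_simp
            rw [hratio]
            -- 1 - u/v ≤ log v - log u for 0 < u ≤ v
            have := Real.log_le_sub_one_of_pos (show 0 < Real.log i / Real.log (i+1) by positivity)
            rw [Real.log_div (ne_of_gt hlogi) (ne_of_gt hlogi1)] at this
            linarith
          calc (bb i - bb (i+1)) * S (i+1)
              ≤ (bb i - bb (i+1)) * (Real.log i + Real.log 4) := h1
            _ = (bb i - bb (i+1)) * Real.log i + Real.log 4 * (bb i - bb (i+1)) := by ring
            _ ≤ (Real.log (Real.log (i+1)) - Real.log (Real.log i))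
                + Real.log 4 * (bb i - bb (i+1)) := by linarith
        · simp only [hi, if_false]
          interval_cases i
          · simp [bb]
          · have hb1 : bb 1 = 0 := by simp [bb]
            have hb2 : S 2 = 0 := by
              simp [hSdef, Finset.sum_range_succ, cc, Nat.not_prime_zero, Nat.not_prime_one]
            rw [hb2]
            simp
      calc ∑ i ∈ range N, (bb i - bb (i+1)) * S (i+1)
          ≤ ∑ i ∈ range N, (if 2 ≤ i then (Real.log (Real.log (i+1)) - Real.log (Real.log i))
              + Real.log 4 * (bb i - bb (i+1)) else 0) := Finset.sum_le_sum hpt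
        _ ≤ Real.log (Real.log N) - Real.log (Real.log 2) + Real.log 4 / Real.log 2 := by
            rw [← Finset.sum_filter]
            have hfe : (range N).filter (fun i => 2 ≤ i) = Finset.Ico 2 N := by
              ext i
              simp [Finset.mem_filter, Finset.mem_Ico, and_comm]
            rw [hfe]
            rw [Finset.sum_add_distrib, ← Finset.mul_sum]
            have ht1 : ∑ i ∈ Finset.Ico 2 N, (Real.log (Real.log (i+1)) - Real.log (Real.log i))
                = Real.log (Real.log N) - Real.log (Real.log 2) := by
              have h := telescope (fun k => Real.log (Real.log k)) 2 N hN
              beta_reduce at h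
              push_cast at h
              rw [← h]
            have ht2 : ∑ i ∈ Finset.Ico 2 N, (bb i - bb (i+1)) = bb 2 - bb N := by
              have h := telescope (fun k => - bb k) 2 N hN
              have h2 : ∑ i ∈ Finset.Ico 2 N, (bb i - bb (i+1))
                  = ∑ i ∈ Finset.Ico 2 N, ((fun k => - bb k) (i+1) - (fun k => - bb k) i) := by
                apply Finset.sum_congr rfl
                intro i _
                simp only []
                ring
              rw [h2, h]
              ring
            rw [ht1, ht2]
            have hbb2 : bb 2 = (Real.log 2)⁻¹ := by norm_num [bb]
            have hbbN : 0 ≤ bb N := by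
              unfold bb
              have : 0 < Real.log N := lt_of_lt_of_le hlog2 hlogN
              positivity
            have h4 : (0:ℝ) ≤ Real.log 4 := Real.log_nonneg (by norm_num)
            have : Real.log 4 * (bb 2 - bb N) ≤ Real.log 4 / Real.log 2 := by
              rw [hbb2]
              rw [div_eq_mul_inv]
              nlinarith
            linarith
    have hflip : ∑ i ∈ range N, (bb (i+1) - bb i) * S (i+1)
        = - ∑ i ∈ range N, (bb i - bb (i+1)) * S (i+1) := by
      rw [← Finset.sum_neg_distrib]
      apply Finset.sum_congr rfl
      intro i _
      ring
    rw [hflip]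
    linarith
  -- final assembly
  have harith : 2 * Real.log 4 / Real.log 2 = Real.log 4 / Real.log 2 + Real.log 4 / Real.log 2 := by
    ring
  linarith [hterm1, hterm2]

/-- Mertens' third theorem lower bound. -/
lemma prod_lower (D : ℕ) (hD : 2 ≤ D) :
    Real.exp (-(2 + 2 * Real.log 4 / Real.log 2 - Real.log (Real.log 2))) / Real.log D
      ≤ ∏ p ∈ (range D).filter Nat.Prime, (1 - (p:ℝ)⁻¹) := by
  have hlog2 : (0:ℝ) < Real.log 2 := Real.log_pos (by norm_num)
  have hlogD : Real.log 2 ≤ Real.log D := by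
    apply Real.log_le_log (by norm_num)
    exact_mod_cast hD
  have hlogDpos : 0 < Real.log D := lt_of_lt_of_le hlog2 hlogD
  set T := (range (D+1)).filter Nat.Prime with hT
  have hmemT : ∀ p ∈ T, p.Prime := fun p hp => (mem_filter.mp hp).2
  have hfac : ∀ p : ℕ, p.Prime → (0:ℝ) < 1 - (p:ℝ)⁻¹ := by
    intro p hp
    have h2 : (2:ℝ) ≤ p := by exact_mod_cast hp.two_le
    have : (p:ℝ)⁻¹ ≤ 2⁻¹ := by
      apply inv_anti₀ (by norm_num) h2
    norm_num at this ⊢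
    linarith
  -- step 1 : restrict to primes < D
  have hsub : (range D).filter Nat.Prime ⊆ T := by
    apply Finset.filter_subset_filter
    exact Finset.range_subset_range.mpr (by omega)
  have h1 : ∏ p ∈ T, (1 - (p:ℝ)⁻¹) ≤ ∏ p ∈ (range D).filter Nat.Prime, (1 - (p:ℝ)⁻¹) := by
    rw [← Finset.prod_sdiff hsub]
    have hA : ∏ p ∈ T \ (range D).filter Nat.Prime, (1 - (p:ℝ)⁻¹) ≤ 1 := by
      apply Finset.prod_le_one
      · intro p hp
        exact le_of_lt (hfac p (hmemT p (Finset.mem_sdiff.mp hp).1))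
      · intro p hp
        have h2 : (2:ℝ) ≤ p := by exact_mod_cast (hmemT p (Finset.mem_sdiff.mp hp).1).two_le
        have : 0 < (p:ℝ)⁻¹ := by positivity
        linarith
    have hB : 0 ≤ ∏ p ∈ (range D).filter Nat.Prime, (1 - (p:ℝ)⁻¹) :=
      Finset.prod_nonneg fun p hp => le_of_lt (hfac p (mem_filter.mp hp).2)
    nlinarith
  -- step 2 : exp bound for each factor
  have h2 : Real.exp (-∑ p ∈ T, ((p:ℝ) - 1)⁻¹) ≤ ∏ p ∈ T, (1 - (p:ℝ)⁻¹) := by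
    have : Real.exp (-∑ p ∈ T, ((p:ℝ) - 1)⁻¹) = ∏ p ∈ T, Real.exp (-((p:ℝ) - 1)⁻¹) := by
      rw [← Real.exp_sum, ← Finset.sum_neg_distrib]
    rw [this]
    apply Finset.prod_le_prod
    · intro p _
      positivity
    · intro p hp
      have hp1 : (1:ℝ) < p := by exact_mod_cast (hmemT p hp).one_lt
      have hx : (0:ℝ) < (p:ℝ) - 1 := by linarith
      set x := ((p:ℝ) - 1)⁻¹ with hxdef
      have hxpos : 0 < x := by positivity
      have hexp : 1 + x ≤ Real.exp x := by
        have := Real.add_one_le_exp x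
        linarith
      have h1x : (1 + x)⁻¹ = 1 - (p:ℝ)⁻¹ := by
        rw [hxdef]
        have hp0 : (p:ℝ) ≠ 0 := by linarith
        field_simp
        ring
      rw [Real.exp_neg, ← h1x]
      apply inv_anti₀ (by linarith) hexp
  -- step 3 : sum of 1/(p-1) vs 1/p
  have h3 : ∑ p ∈ T, ((p:ℝ) - 1)⁻¹ ≤ (∑ p ∈ T, (p:ℝ)⁻¹) + 1 := by
    have hdiff : ∑ p ∈ T, (((p:ℝ) - 1)⁻¹ - (p:ℝ)⁻¹) ≤ 1 := by
      have hsubI : T ⊆ Finset.Ico 2 (D+1) := by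
        intro p hp
        rw [Finset.mem_Ico]
        rw [hT, mem_filter, mem_range] at hp
        exact ⟨hp.2.two_le, hp.1⟩
      have hnn : ∀ n ∈ Finset.Ico 2 (D+1), n ∉ T → 0 ≤ ((n:ℝ) - 1)⁻¹ - (n:ℝ)⁻¹ := by
        intro n hn _
        rw [Finset.mem_Ico] at hn
        have h2 : (2:ℝ) ≤ n := by exact_mod_cast hn.1
        rw [sub_nonneg]
        apply inv_anti₀ (by linarith) (by linarith)
      calc ∑ p ∈ T, (((p:ℝ) - 1)⁻¹ - (p:ℝ)⁻¹)
          ≤ ∑ n ∈ Finset.Ico 2 (D+1), (((n:ℝ) - 1)⁻¹ - (n:ℝ)⁻¹) :=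
            Finset.sum_le_sum_of_subset_of_nonneg hsubI hnn
        _ = 1 - (D:ℝ)⁻¹ := by
            have h := telescope (fun n => -((n:ℝ) - 1)⁻¹) 2 (D+1) (by omega)
            beta_reduce at h
            push_cast at h
            have heq : ∀ n ∈ Finset.Ico 2 (D+1),
                ((n:ℝ) - 1)⁻¹ - (n:ℝ)⁻¹ = -((n:ℝ) + 1 - 1)⁻¹ - -((n:ℝ) - 1)⁻¹ := by
              intro n hn
              rw [Finset.mem_Ico] at hn
              have h2 : (2:ℝ) ≤ n := by exact_mod_cast hn.1
              have : ((n:ℝ) + 1 - 1) = (n:ℝ) := by ring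
              rw [this]
              ring
            rw [Finset.sum_congr rfl heq, h]
            norm_num
            linarith
        _ ≤ 1 := by
            have : 0 ≤ (D:ℝ)⁻¹ := by positivity
            linarith
    have := Finset.sum_sub_distrib (f := fun p => ((p:ℝ) - 1)⁻¹) (g := fun p => ((p:ℝ))⁻¹) (s := T)
    rw [this] at hdiff
    linarith
  -- step 4 : Mertens
  have h4 : ∑ p ∈ T, ((p:ℝ))⁻¹ ≤
      Real.log (Real.log D) + (1 + 2 * Real.log 4 / Real.log 2 - Real.log (Real.log 2)) :=
    primeRecip D hD
  calc Real.exp (-(2 + 2 * Real.log 4 / Real.log 2 - Real.log (Real.log 2))) / Real.log D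
      = Real.exp (-(Real.log (Real.log D)
          + (1 + 2 * Real.log 4 / Real.log 2 - Real.log (Real.log 2)) + 1)) := by
        rw [show -(Real.log (Real.log D)
            + (1 + 2 * Real.log 4 / Real.log 2 - Real.log (Real.log 2)) + 1)
          = -(2 + 2 * Real.log 4 / Real.log 2 - Real.log (Real.log 2))
            + -(Real.log (Real.log D)) by ring]
        rw [Real.exp_add, Real.exp_neg (Real.log (Real.log D)), Real.exp_log hlogDpos]
        rw [div_eq_mul_inv]
    _ ≤ Real.exp (-∑ p ∈ T, ((p:ℝ) - 1)⁻¹) := by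
        apply Real.exp_le_exp.mpr
        simp only [neg_le_neg_iff]
        linarith
    _ ≤ ∏ p ∈ T, (1 - (p:ℝ)⁻¹) := h2
    _ ≤ _ := h1


/-! ### Assembly -/

lemma squarefree_prod_primes {s : Finset ℕ} (hs : ∀ p ∈ s, p.Prime) :
    Squarefree (∏ p ∈ s, p) := by
  have h0 : (∏ p ∈ s, p) ≠ 0 := Finset.prod_ne_zero_iff.mpr fun p hp => (hs p hp).ne_zero
  rw [Nat.squarefree_iff_factorization_le_one h0]
  intro q
  rw [Nat.factorization_prod (fun p hp => (hs p hp).ne_zero)]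
  rw [Finset.sum_apply']
  have hterm : ∀ p ∈ s, (Nat.factorization p) q = if p = q then 1 else 0 := by
    intro p hp
    rw [(hs p hp).factorization, Finsupp.single_apply]
  rw [Finset.sum_congr rfl hterm, Finset.sum_ite_eq' s q (fun _ => 1)]
  split <;> simp

lemma sum_divisors_filter_eq (s : Finset ℕ) (hs : ∀ p ∈ s, p.Prime)
    (pr : ℕ → Prop) [DecidablePred pr] (f : ℕ → ℝ) :
    ∑ d ∈ ((∏ p ∈ s, p).divisors).filter pr, f d
      = ∑ t ∈ s.powerset.filter (fun t => pr (∏ p ∈ t, p)), f (∏ p ∈ t, p) := by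
  have hN0 : (∏ p ∈ s, p) ≠ 0 := Finset.prod_ne_zero_iff.mpr fun p hp => (hs p hp).ne_zero
  have hsq : Squarefree (∏ p ∈ s, p) := squarefree_prod_primes hs
  have hpf : (∏ p ∈ s, p).primeFactors = s := Nat.primeFactors_prod hs
  apply Finset.sum_nbij' (i := fun d => d.primeFactors) (j := fun t => ∏ p ∈ t, p)
  · intro d hd
    rw [Finset.mem_filter, Nat.mem_divisors] at hd
    rw [Finset.mem_filter, Finset.mem_powerset]
    have hdvd := hd.1.1
    have hdsq : Squarefree d := hsq.squarefree_of_dvd hdvd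
    have hsubs : d.primeFactors ⊆ s := by
      rw [← hpf]; exact Nat.primeFactors_mono hdvd hN0
    rw [Nat.prod_primeFactors_of_squarefree hdsq]
    exact ⟨hsubs, hd.2⟩
  · intro t ht
    rw [Finset.mem_filter, Finset.mem_powerset] at ht
    rw [Finset.mem_filter, Nat.mem_divisors]
    exact ⟨⟨Finset.prod_dvd_prod_of_subset _ _ _ ht.1, hN0⟩, ht.2⟩
  · intro d hd
    rw [Finset.mem_filter, Nat.mem_divisors] at hd
    exact Nat.prod_primeFactors_of_squarefree (hsq.squarefree_of_dvd hd.1.1)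
  · intro t ht
    rw [Finset.mem_filter, Finset.mem_powerset] at ht
    exact Nat.primeFactors_prod (fun p hp => hs p (ht.1 hp))
  · intro d hd
    rw [Finset.mem_filter, Nat.mem_divisors] at hd
    rw [Nat.prod_primeFactors_of_squarefree (hsq.squarefree_of_dvd hd.1.1)]

lemma moebius_prod (s : Finset ℕ) (hs : ∀ p ∈ s, p.Prime) :
    ((ArithmeticFunction.moebius (∏ p ∈ s, p) : ℤ) : ℝ) / ((∏ p ∈ s, p : ℕ) : ℝ)
      = ∏ p ∈ s, (-(p:ℝ)⁻¹) := by
  have h1 : ArithmeticFunction.moebius (∏ p ∈ s, p) = (-1) ^ s.card := by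
    rw [ArithmeticFunction.IsMultiplicative.map_prod_of_prime
      ArithmeticFunction.isMultiplicative_moebius s hs]
    rw [Finset.prod_congr rfl (fun p hp => ArithmeticFunction.moebius_apply_prime (hs p hp))]
    rw [Finset.prod_const]
  have h2 : ∏ p ∈ s, (-(p:ℝ)⁻¹) = (-1) ^ s.card * (∏ p ∈ s, (p:ℝ))⁻¹ := by
    rw [← Finset.prod_inv_distrib, ← Finset.prod_const (-1:ℝ), ← Finset.prod_mul_distrib]
    exact Finset.prod_congr rfl fun p _ => by ring
  rw [h1, h2]
  push_cast
  rw [div_eq_mul_inv]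

open scoped Classical in
theorem main :
    ∃ c > 0, ∀ D a : ℕ, 2 ≤ D → 1 ≤ a → a ≤ D →
      c * ((a : ℝ) / (Nat.totient a : ℝ)) / Real.log D ≤
        ∑ d ∈ ((∏ p ∈ (Finset.range D).filter Nat.Prime, p).divisors).filter
            (fun d => Nat.Coprime d a ∧ DPlus D d),
          ((ArithmeticFunction.moebius d : ℤ) : ℝ) / d := by
  set c₂ : ℝ := Real.exp (-(2 + 2 * Real.log 4 / Real.log 2 - Real.log (Real.log 2))) with hc₂
  have hc₂pos : 0 < c₂ := Real.exp_pos _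
  refine ⟨c₂ / 2, by positivity, ?_⟩
  intro D a hD ha haD
  have hlogD : 0 < Real.log D := Real.log_pos (by exact_mod_cast hD)
  have ha0 : a ≠ 0 := by omega
  set Q := (Finset.range D).filter Nat.Prime with hQdef
  have hQ : ∀ p ∈ Q, p.Prime ∧ p < D := by
    intro p hp
    rw [hQdef, Finset.mem_filter, Finset.mem_range] at hp
    exact ⟨hp.2, hp.1⟩
  set P := Q.filter (fun p => ¬ p ∣ a) with hPdef
  have hPQ : P ⊆ Q := Finset.filter_subset _ _
  have hPprime : ∀ p ∈ P, p.Prime := fun p hp => (hQ p (hPQ hp)).1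
  -- Step 1 : rewrite the sum over divisors as a sum over subsets
  rw [sum_divisors_filter_eq Q (fun p hp => (hQ p hp).1)]
  -- Step 2 : identify the index set
  have hsets : Q.powerset.filter (fun t => Nat.Coprime (∏ p ∈ t, p) a ∧ DPlus D (∏ p ∈ t, p))
      = P.powerset.filter (fun t => GoodL D (sortedDesc t)) := by
    ext t
    rw [Finset.mem_filter, Finset.mem_filter, Finset.mem_powerset, Finset.mem_powerset]
    constructor
    · rintro ⟨htQ, hcop, hdp⟩
      have hco : ∀ p ∈ t, ¬ p ∣ a := by
        intro p hp
        have := Nat.coprime_prod_left_iff.mp hcop p hp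
        exact ((hQ p (htQ hp)).1.coprime_iff_not_dvd).mp this
      refine ⟨?_, ?_⟩
      · intro p hp
        rw [hPdef, Finset.mem_filter]
        exact ⟨htQ hp, hco p hp⟩
      · exact (dplus_iff (fun p hp => hQ p (htQ hp))).mp hdp
    · rintro ⟨htP, hgood⟩
      have htQ : t ⊆ Q := htP.trans hPQ
      refine ⟨htQ, ?_, ?_⟩
      · rw [Nat.coprime_prod_left_iff]
        intro p hp
        rw [(hQ p (htQ hp)).1.coprime_iff_not_dvd]
        exact (Finset.mem_filter.mp (htP hp)).2
      · exact (dplus_iff (fun p hp => hQ p (htQ hp))).mpr hgood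
  rw [hsets]
  -- Step 3 : rewrite the summands
  have hterm : ∀ t ∈ P.powerset.filter (fun t => GoodL D (sortedDesc t)),
      ((ArithmeticFunction.moebius (∏ p ∈ t, p) : ℤ) : ℝ) / ((∏ p ∈ t, p : ℕ) : ℝ)
        = ∏ p ∈ t, (-(p:ℝ)⁻¹) := by
    intro t ht
    rw [Finset.mem_filter, Finset.mem_powerset] at ht
    exact moebius_prod t (fun p hp => hPprime p (ht.1 hp))
  rw [Finset.sum_congr rfl hterm]
  -- Step 4 : apply the sieve inequality
  have hsieve := sieve_lower D P hPprime
  -- Step 5 : lower-bound the product over P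
  have hfacpos : ∀ p : ℕ, p.Prime → (0:ℝ) < 1 - (p:ℝ)⁻¹ := by
    intro p hp
    have h2 : (2:ℝ) ≤ p := by exact_mod_cast hp.two_le
    have : (p:ℝ)⁻¹ ≤ 2⁻¹ := inv_anti₀ (by norm_num) h2
    norm_num at this ⊢
    linarith
  set R := Q.filter (fun p => p ∣ a) with hRdef
  have hPR : (∏ p ∈ P, (1 - (p:ℝ)⁻¹)) * (∏ p ∈ R, (1 - (p:ℝ)⁻¹))
      = ∏ p ∈ Q, (1 - (p:ℝ)⁻¹) := by
    rw [hPdef, hRdef]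
    rw [← Finset.prod_filter_mul_prod_filter_not Q (fun p => p ∣ a) (fun p => 1 - (p:ℝ)⁻¹)]
    ring
  -- totient formula
  have hphi : (a:ℝ) / (Nat.totient a : ℝ) = ∏ p ∈ a.primeFactors, (1 - (p:ℝ)⁻¹)⁻¹ := by
    have hq := Nat.totient_eq_mul_prod_factors a
    have hqr : (Nat.totient a : ℝ) = (a:ℝ) * ∏ p ∈ a.primeFactors, (1 - (p:ℝ)⁻¹) := by
      have := congrArg (fun q : ℚ => (q : ℝ)) hq
      push_cast at this
      exact_mod_cast this
    rw [hqr]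
    have hprodpos : (0:ℝ) < ∏ p ∈ a.primeFactors, (1 - (p:ℝ)⁻¹) :=
      Finset.prod_pos fun p hp => hfacpos p (Nat.prime_of_mem_primeFactors hp)
    have haR : (0:ℝ) < a := by exact_mod_cast Nat.pos_of_ne_zero ha0
    rw [Finset.prod_inv_distrib, div_mul_eq_div_div, div_self (ne_of_gt haR), one_div]
  -- R sits inside the prime factors of a, missing at most D itself
  have hRsub : R ⊆ a.primeFactors := by
    intro p hp
    rw [hRdef, Finset.mem_filter] at hp
    exact Nat.mem_primeFactors.mpr ⟨(hQ p hp.1).1, hp.2, ha0⟩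
  have hextra : a.primeFactors \ R ⊆ {D} := by
    intro p hp
    rw [Finset.mem_sdiff] at hp
    obtain ⟨hpf, hpR⟩ := hp
    have hpp := Nat.prime_of_mem_primeFactors hpf
    have hpa := Nat.dvd_of_mem_primeFactors hpf
    have hple : p ≤ a := Nat.le_of_dvd (by omega) hpa
    rw [Finset.mem_singleton]
    by_contra hne
    have hpD : p < D := by
      rcases lt_or_eq_of_le (hple.trans haD) with h | h
      · exact h
      · exact absurd h hne
    exact hpR (by rw [hRdef, Finset.mem_filter, hQdef, Finset.mem_filter, Finset.mem_range]
                  exact ⟨⟨hpD, hpp⟩, hpa⟩)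
  -- a / φ(a) ≤ 2 ∏_{p ∈ R} (1 - 1/p)⁻¹
  have hRprime : ∀ p ∈ R, p.Prime := by
    intro p hp
    rw [hRdef, Finset.mem_filter] at hp
    exact (hQ p hp.1).1
  have hRpos : (0:ℝ) < ∏ p ∈ R, (1 - (p:ℝ)⁻¹)⁻¹ :=
    Finset.prod_pos fun p hp => inv_pos.mpr (hfacpos p (hRprime p hp))
  have hsplit2 : (a:ℝ) / (Nat.totient a : ℝ) ≤ 2 * ∏ p ∈ R, (1 - (p:ℝ)⁻¹)⁻¹ := by
    rw [hphi, ← Finset.prod_sdiff hRsub]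
    have hExtra : ∏ p ∈ a.primeFactors \ R, (1 - (p:ℝ)⁻¹)⁻¹ ≤ 2 := by
      rcases Finset.subset_singleton_iff.mp hextra with h | h
      · rw [h]; norm_num
      · rw [h, Finset.prod_singleton]
        have hD2 : (2:ℝ) ≤ D := by exact_mod_cast hD
        have hhalf : (1:ℝ)/2 ≤ 1 - (D:ℝ)⁻¹ := by
          have : (D:ℝ)⁻¹ ≤ 2⁻¹ := inv_anti₀ (by norm_num) hD2
          norm_num at this ⊢
          linarith
        calc (1 - (D:ℝ)⁻¹)⁻¹ ≤ ((1:ℝ)/2)⁻¹ := inv_anti₀ (by norm_num) hhalf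
          _ = 2 := by norm_num
    exact mul_le_mul_of_nonneg_right hExtra hRpos.le
  -- positivity facts
  have hQpos : (0:ℝ) < ∏ p ∈ Q, (1 - (p:ℝ)⁻¹) :=
    Finset.prod_pos fun p hp => hfacpos p (hQ p hp).1
  have hRinv : (∏ p ∈ R, (1 - (p:ℝ)⁻¹)⁻¹) * (∏ p ∈ R, (1 - (p:ℝ)⁻¹)) = 1 := by
    rw [← Finset.prod_mul_distrib]
    rw [Finset.prod_congr rfl
      (fun p hp => inv_mul_cancel₀ (ne_of_gt (hfacpos p (hRprime p hp))))]
    exact Finset.prod_const_one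
  have haphi : (0:ℝ) < (a:ℝ) / (Nat.totient a : ℝ) := by
    have h1 : (0:ℝ) < a := by exact_mod_cast Nat.pos_of_ne_zero ha0
    have h2 : 0 < Nat.totient a := Nat.totient_pos.mpr (by omega)
    have h2' : (0:ℝ) < (Nat.totient a : ℝ) := by exact_mod_cast h2
    positivity
  have hkey : (a:ℝ) / (Nat.totient a : ℝ) / 2 * ∏ p ∈ Q, (1 - (p:ℝ)⁻¹)
      ≤ ∏ p ∈ P, (1 - (p:ℝ)⁻¹) := by
    calc (a:ℝ) / (Nat.totient a : ℝ) / 2 * ∏ p ∈ Q, (1 - (p:ℝ)⁻¹)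
        ≤ (∏ p ∈ R, (1 - (p:ℝ)⁻¹)⁻¹) * ∏ p ∈ Q, (1 - (p:ℝ)⁻¹) := by
          apply mul_le_mul_of_nonneg_right _ hQpos.le
          linarith
      _ = (∏ p ∈ P, (1 - (p:ℝ)⁻¹)) *
            ((∏ p ∈ R, (1 - (p:ℝ)⁻¹)⁻¹) * ∏ p ∈ R, (1 - (p:ℝ)⁻¹)) := by
          rw [← hPR]; ring
      _ = ∏ p ∈ P, (1 - (p:ℝ)⁻¹) := by rw [hRinv, mul_one]
  have hmert := prod_lower D hD
  calc c₂ / 2 * ((a:ℝ) / (Nat.totient a : ℝ)) / Real.log D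
      = ((a:ℝ) / (Nat.totient a : ℝ) / 2) * (c₂ / Real.log D) := by ring
    _ ≤ ((a:ℝ) / (Nat.totient a : ℝ) / 2) * ∏ p ∈ Q, (1 - (p:ℝ)⁻¹) := by
        apply mul_le_mul_of_nonneg_left _ (by linarith)
        rw [hc₂]
        exact hmert
    _ ≤ ∏ p ∈ P, (1 - (p:ℝ)⁻¹) := hkey
    _ ≤ _ := hsieve

end Stmt12

open scoped Classical in
theorem stmt_12 :
    ∃ c > 0, ∀ D a : ℕ, 2 ≤ D → 1 ≤ a → a ≤ D →
      c * ((a : ℝ) / (Nat.totient a : ℝ)) / Real.log D ≤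
        ∑ d ∈ ((∏ p ∈ (Finset.range D).filter Nat.Prime, p).divisors).filter
            (fun d => Nat.Coprime d a ∧ DPlus D d),
          ((ArithmeticFunction.moebius d : ℤ) : ℝ) / d :=
  Stmt12.main
end
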